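/- arXiv:1004.1702 — 5 statements merged into one kernel-verified Lean document; each statement's English description precedes it below -/
import Mathlib

section
/- Let X be a finite group, Y a normal subgroup such that X/Y is a p-group, k an algebraically closed field of characteristic p, and N a simple kY-module. Then N extends to a k[X_N]-module, where X_N is the stabilizer in X of the isomorphism class of N. -/
/-- The conjugation homomorphism `y ↦ x⁻¹ y x` on a normal subgroup `Y` of `X`. -/
def conjHom {X : Type*} [Group X] (Y : Subgroup X) (hY : Y.Normal) (x : X) : Y →* Y where
  toFun y := ⟨x⁻¹ * (y : X) * x, by simpa using hY.conj_mem (y : X) y.2 x⁻¹⟩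
  map_one' := by ext; simp
  map_mul' a b := by ext; simp [mul_assoc]

/-- A submodule is invariant under a representation. -/
def RepInvariant {k G V : Type*} [CommSemiring k] [Monoid G] [AddCommMonoid V] [Module k V]
    (ρ : Representation k G V) (W : Submodule k V) : Prop :=
  ∀ g : G, ∀ v ∈ W, ρ g v ∈ W

/-- A representation is simple if the space is nonzero and the only invariant
submodules are `⊥` and `⊤`. -/
def IsSimpleRep {k G V : Type*} [CommSemiring k] [Monoid G] [AddCommMonoid V] [Module k V]
    (ρ : Representation k G V) : Prop :=
  Nontrivial V ∧ ∀ W : Submodule k V, RepInvariant ρ W → W = ⊥ ∨ W = ⊤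

/-- Isomorphism of representations of the same group. -/
def RepIso {k G V₁ V₂ : Type*} [CommSemiring k] [Monoid G] [AddCommMonoid V₁] [Module k V₁]
    [AddCommMonoid V₂] [Module k V₂]
    (ρ₁ : Representation k G V₁) (ρ₂ : Representation k G V₂) : Prop :=
  ∃ e : V₁ ≃ₗ[k] V₂, ∀ (g : G) (v : V₁), e (ρ₁ g v) = ρ₂ g (e v)

section Aux

variable {k : Type*} [Field k]
variable {X : Type*} [Group X] {Y : Subgroup X}
variable {V : Type*} [AddCommGroup V] [Module k V]

/-- Conjugation `y ↦ x y x⁻¹` as a map `Y → Y`. -/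
def conjY (hY : Y.Normal) (x : X) (y : Y) : Y :=
  ⟨x * (y : X) * x⁻¹, hY.conj_mem y y.2 x⟩

lemma conjY_mul (hY : Y.Normal) (x x' : X) (y : Y) :
    conjY hY x (conjY hY x' y) = conjY hY (x * x') y := by
  ext; simp [conjY, mul_assoc]

lemma conjY_coe (hY : Y.Normal) (w y : Y) :
    conjY hY (w : X) y = w * y * w⁻¹ := by
  ext; simp [conjY]

lemma schur [IsAlgClosed k] [FiniteDimensional k V]
    (ρ : Representation k Y V) (hρ : IsSimpleRep ρ)
    (f : V →ₗ[k] V) (hf : ∀ (y : Y) (v : V), f (ρ y v) = ρ y (f v)) :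
    ∃ c : k, ∀ v, f v = c • v := by
  obtain ⟨hnt, hsimp⟩ := hρ
  haveI := hnt
  obtain ⟨c, hc⟩ := Module.End.exists_eigenvalue f
  refine ⟨c, fun v => ?_⟩
  have hinv : RepInvariant ρ (Module.End.eigenspace f c) := by
    intro y v hv
    rw [Module.End.mem_eigenspace_iff] at hv ⊢
    rw [hf, hv, map_smul]
  have hW : Module.End.eigenspace f c = ⊤ := by
    rcases hsimp _ hinv with h | h
    · exact absurd h hc
    · exact h
  have : v ∈ Module.End.eigenspace f c := hW ▸ Submodule.mem_top
  exact Module.End.mem_eigenspace_iff.mp this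

lemma exists_scalar [IsAlgClosed k] [FiniteDimensional k V]
    (ρ : Representation k Y V) (hρ : IsSimpleRep ρ) (hY : Y.Normal) (x : X)
    (A B : V →ₗ[k] V)
    (hA : ∀ (y : Y) (v : V), A (ρ y v) = ρ (conjY hY x y) (A v))
    (hB : ∀ (y : Y) (v : V), B (ρ y v) = ρ (conjY hY x y) (B v))
    (hBbij : Function.Bijective B) :
    ∃ c : k, ∀ v, A v = c • B v := by
  let e : V ≃ₗ[k] V := LinearEquiv.ofBijective B hBbij
  have heB : ∀ v, e v = B v := fun v => rfl
  have hsymm : ∀ (y : Y) (w : V), e.symm (ρ (conjY hY x y) w) = ρ y (e.symm w) := by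
    intro y w
    apply e.injective
    rw [e.apply_symm_apply, heB, hB, ← heB, e.apply_symm_apply]
  obtain ⟨c, hc⟩ := schur ρ hρ (e.symm.toLinearMap ∘ₗ A) (fun y v => by
    simp only [LinearMap.comp_apply, LinearEquiv.coe_coe]
    rw [hA, hsymm])
  refine ⟨c, fun v => ?_⟩
  have := hc v
  simp only [LinearMap.comp_apply, LinearEquiv.coe_coe] at this
  have h2 : A v = e (c • v) := by rw [← this, e.apply_symm_apply]
  rw [h2, map_smul, heB]

end Aux

/-- A simple `kY`-module `N` extends to its stabilizer `X_N` in `X`,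
when `Y ⊴ X`, `X/Y` is a `p`-group and `k` is algebraically closed of characteristic `p`. -/
theorem simple_module_extends_to_stabilizer
    {p : ℕ} (hp : p.Prime) (k : Type*) [Field k] [IsAlgClosed k] [CharP k p]
    (X : Type*) [Group X] [Finite X] (Y : Subgroup X) (hY : Y.Normal)
    (hXY : IsPGroup p (X ⧸ Y))
    (V : Type*) [AddCommGroup V] [Module k V] [FiniteDimensional k V]
    (ρ : Representation k Y V) (hρ : IsSimpleRep ρ)
    (S : Subgroup X)
    (hS : ∀ x : X, x ∈ S ↔ RepIso (ρ.comp (conjHom Y hY x)) ρ) :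
    ∃ ρext : Representation k S V, ∀ (y : S) (hy : (y : X) ∈ Y), ρext y = ρ ⟨y, hy⟩ := by
  classical
  haveI : Fact p.Prime := ⟨hp⟩
  haveI hYn : Y.Normal := hY
  obtain ⟨hnt, -⟩ := id hρ
  haveI := hnt
  haveI : (Y.subgroupOf S).Normal := inferInstance
  haveI : Fintype (S ⧸ Y.subgroupOf S) := Fintype.ofFinite _
  -- basic facts about ρ
  have hρmul : ∀ (a b : Y) (v : V), ρ (a * b) v = ρ a (ρ b v) := by
    intro a b v; rw [map_mul]; rfl
  have hρone : ∀ v : V, ρ 1 v = v := by intro v; rw [map_one]; rfl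
  have hρinv : ∀ (a : Y) (v : V), ρ a (ρ a⁻¹ v) = v := by
    intro a v; rw [← hρmul, mul_inv_cancel, hρone]
  have hρbij : ∀ a : Y, Function.Bijective (ρ a) := by
    intro a
    constructor
    · intro u v huv
      have h2 := congrArg (ρ a⁻¹) huv
      rwa [← hρmul, ← hρmul, inv_mul_cancel, hρone, hρone] at h2
    · intro v; exact ⟨ρ a⁻¹ v, hρinv a v⟩
  -- choose intertwiners
  have hΦex : ∀ x : S, ∃ e : V ≃ₗ[k] V,
      ∀ (y : Y) (v : V), e (ρ y v) = ρ (conjY hY (x : X) y) (e v) := by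
    intro x
    obtain ⟨e, he⟩ := (hS x).mp x.2
    refine ⟨e, fun y v => ?_⟩
    have h1 : conjHom Y hY (x : X) (conjY hY (x : X) y) = y := by
      ext; simp [conjHom, conjY, mul_assoc]
    have h2 := he (conjY hY (x : X) y) v
    rwa [MonoidHom.comp_apply, h1] at h2
  choose Φ hΦ using hΦex
  -- section of the quotient
  obtain ⟨s, hs⟩ : ∃ s : S ⧸ Y.subgroupOf S → S,
      ∀ q, (QuotientGroup.mk (s q) : S ⧸ Y.subgroupOf S) = q :=
    ⟨fun q => q.out, fun q => q.out_eq'⟩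
  -- the Y-parts
  have hmemY : ∀ g : S, ((g * (s (QuotientGroup.mk g))⁻¹ : S) : X) ∈ Y := by
    intro g
    have h1 : (QuotientGroup.mk (g * (s (QuotientGroup.mk g))⁻¹) : S ⧸ Y.subgroupOf S) = 1 := by
      rw [QuotientGroup.mk_mul, QuotientGroup.mk_inv, hs, mul_inv_cancel]
    exact Subgroup.mem_subgroupOf.mp ((QuotientGroup.eq_one_iff _).mp h1)
  obtain ⟨yOf, hyOf⟩ : ∃ yOf : S → Y, ∀ g : S,
      (yOf g : X) = (g : X) * ((s (QuotientGroup.mk g) : S) : X)⁻¹ :=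
    ⟨fun g => ⟨_, hmemY g⟩, fun g => by push_cast; ring⟩
  have hmemW : ∀ q r : S ⧸ Y.subgroupOf S, ((s q * s r * (s (q * r))⁻¹ : S) : X) ∈ Y := by
    intro q r
    have h1 : (QuotientGroup.mk (s q * s r * (s (q * r))⁻¹) : S ⧸ Y.subgroupOf S) = 1 := by
      rw [QuotientGroup.mk_mul, QuotientGroup.mk_mul, QuotientGroup.mk_inv, hs, hs, hs,
        mul_inv_cancel]
    exact Subgroup.mem_subgroupOf.mp ((QuotientGroup.eq_one_iff _).mp h1)
  obtain ⟨w, hw⟩ : ∃ w : S ⧸ Y.subgroupOf S → S ⧸ Y.subgroupOf S → Y, ∀ q r,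
      (w q r : X) = ((s q : S) : X) * ((s r : S) : X) * (((s (q * r) : S) : X))⁻¹ :=
    ⟨fun q r => ⟨_, hmemW q r⟩, fun q r => by push_cast; ring⟩
  -- the cocycle scalars
  have hccex : ∀ q r : S ⧸ Y.subgroupOf S, ∃ c : k, c ≠ 0 ∧
      ∀ v, Φ (s q) (Φ (s r) v) = c • ρ (w q r) (Φ (s (q * r)) v) := by
    intro q r
    have hA : ∀ (y : Y) (v : V),
        ((Φ (s q)).toLinearMap ∘ₗ (Φ (s r)).toLinearMap) (ρ y v)
          = ρ (conjY hY (((s q : S) : X) * ((s r : S) : X)) y)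
            (((Φ (s q)).toLinearMap ∘ₗ (Φ (s r)).toLinearMap) v) := by
      intro y v
      simp only [LinearMap.comp_apply, LinearEquiv.coe_coe]
      rw [hΦ (s r), hΦ (s q), conjY_mul]
    have hB : ∀ (y : Y) (v : V),
        ((ρ (w q r)) ∘ₗ (Φ (s (q * r))).toLinearMap) (ρ y v)
          = ρ (conjY hY (((s q : S) : X) * ((s r : S) : X)) y)
            (((ρ (w q r)) ∘ₗ (Φ (s (q * r))).toLinearMap) v) := by
      intro y v
      simp only [LinearMap.comp_apply, LinearEquiv.coe_coe]
      rw [hΦ (s (q * r)), ← hρmul, ← hρmul]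
      have hYeq : w q r * conjY hY (((s (q * r) : S) : X)) y
          = conjY hY (((s q : S) : X) * ((s r : S) : X)) y * w q r := by
        ext
        push_cast [conjY, hw]
        group
      rw [hYeq]
    have hBbij : Function.Bijective ((ρ (w q r)) ∘ₗ (Φ (s (q * r))).toLinearMap) := by
      have := (hρbij (w q r)).comp (Φ (s (q * r))).bijective
      simpa [Function.comp] using this
    obtain ⟨c, hc⟩ := exists_scalar ρ hρ hY (((s q : S) : X) * ((s r : S) : X))
      ((Φ (s q)).toLinearMap ∘ₗ (Φ (s r)).toLinearMap)
      ((ρ (w q r)) ∘ₗ (Φ (s (q * r))).toLinearMap) hA hB hBbij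
    refine ⟨c, ?_, fun v => by simpa using hc v⟩
    intro h0
    obtain ⟨v, hv⟩ := exists_ne (0 : V)
    have h2 := hc v
    rw [h0, zero_smul] at h2
    simp only [LinearMap.comp_apply, LinearEquiv.coe_coe] at h2
    exact hv ((Φ (s r)).map_eq_zero_iff.mp ((Φ (s q)).map_eq_zero_iff.mp h2))
  choose cc hcc0 hcc using hccex
  -- the twisted translation operators
  obtain ⟨T, hT⟩ : ∃ T : S → (V →ₗ[k] V), ∀ (g : S) (v : V),
      T g v = ρ (yOf g) (Φ (s (QuotientGroup.mk g)) v) :=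
    ⟨fun g => (ρ (yOf g)) ∘ₗ (Φ (s (QuotientGroup.mk g))).toLinearMap, fun g v => rfl⟩
  have hTinj : ∀ g, Function.Injective (T g) := by
    intro g u v huv
    rw [hT, hT] at huv
    exact (Φ _).injective ((hρbij _).1 huv)
  have hTmul : ∀ (g h : S) (v : V),
      T g (T h v) = cc (QuotientGroup.mk g) (QuotientGroup.mk h) • T (g * h) v := by
    intro g h v
    rw [hT, hT, hT, hΦ (s (QuotientGroup.mk g)) (yOf h), hcc, map_smul, map_smul,
      ← hρmul, ← hρmul, ← QuotientGroup.mk_mul]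
    have hAB : yOf g * conjY hY (((s (QuotientGroup.mk g) : S) : X)) (yOf h)
          * w (QuotientGroup.mk g) (QuotientGroup.mk h) = yOf (g * h) := by
      ext
      push_cast [conjY, hw, hyOf, QuotientGroup.mk_mul]
      group
    rw [hAB]
  -- cocycle identity
  have hkey : ∀ q r t : S ⧸ Y.subgroupOf S,
      cc q r * cc (q * r) t = cc r t * cc q (r * t) := by
    intro q r t
    obtain ⟨g, rfl⟩ := QuotientGroup.mk_surjective q
    obtain ⟨h, rfl⟩ := QuotientGroup.mk_surjective r
    obtain ⟨l, rfl⟩ := QuotientGroup.mk_surjective t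
    obtain ⟨v, hv0⟩ := exists_ne (0 : V)
    have h1 : T g (T h (T l v))
        = (cc (QuotientGroup.mk g) (QuotientGroup.mk h)
            * cc (QuotientGroup.mk g * QuotientGroup.mk h) (QuotientGroup.mk l))
          • T (g * h * l) v := by
      rw [hTmul g h, hTmul (g * h) l, QuotientGroup.mk_mul, smul_smul]
    have h2 : T g (T h (T l v))
        = (cc (QuotientGroup.mk h) (QuotientGroup.mk l)
            * cc (QuotientGroup.mk g) (QuotientGroup.mk h * QuotientGroup.mk l))
          • T (g * h * l) v := by
      rw [hTmul h l, map_smul, hTmul g (h * l), QuotientGroup.mk_mul, smul_smul, mul_assoc]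
    have h3 := h1.symm.trans h2
    have hw0 : T (g * h * l) v ≠ 0 := fun h0 => hv0 (hTinj _ (by rw [h0, map_zero]))
    have h4 : (cc (QuotientGroup.mk g) (QuotientGroup.mk h)
            * cc (QuotientGroup.mk g * QuotientGroup.mk h) (QuotientGroup.mk l)
          - cc (QuotientGroup.mk h) (QuotientGroup.mk l)
            * cc (QuotientGroup.mk g) (QuotientGroup.mk h * QuotientGroup.mk l))
          • T (g * h * l) v = 0 := by
      rw [sub_smul, h3, sub_self]
    rcases smul_eq_zero.mp h4 with h5 | h5
    · exact sub_eq_zero.mp h5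
    · exact absurd h5 hw0
  -- the product function β
  obtain ⟨β, hβdef⟩ : ∃ β : S ⧸ Y.subgroupOf S → k,
      ∀ q, β q = ∏ r : S ⧸ Y.subgroupOf S, cc q r := ⟨_, fun q => rfl⟩
  have hβ0 : ∀ q, β q ≠ 0 := by
    intro q
    rw [hβdef]
    exact Finset.prod_ne_zero_iff.mpr fun r _ => hcc0 q r
  have hβmul : ∀ q r, β r * β q
      = cc q r ^ (Nat.card (S ⧸ Y.subgroupOf S)) * β (q * r) := by
    intro q r
    rw [hβdef, hβdef, hβdef, Nat.card_eq_fintype_card]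
    calc (∏ t : S ⧸ Y.subgroupOf S, cc r t) * ∏ t : S ⧸ Y.subgroupOf S, cc q t
        = (∏ t : S ⧸ Y.subgroupOf S, cc r t) * ∏ t : S ⧸ Y.subgroupOf S, cc q (r * t) := by
          congr 1
          exact (Fintype.prod_equiv (Equiv.mulLeft r) _ _ (fun t => by simp)).symm
      _ = ∏ t : S ⧸ Y.subgroupOf S, (cc r t * cc q (r * t)) := by
          rw [Finset.prod_mul_distrib]
      _ = ∏ t : S ⧸ Y.subgroupOf S, (cc q r * cc (q * r) t) := by
          exact Finset.prod_congr rfl fun t _ => (hkey q r t).symm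
      _ = cc q r ^ Fintype.card (S ⧸ Y.subgroupOf S) * ∏ t : S ⧸ Y.subgroupOf S, cc (q * r) t := by
          rw [Finset.prod_mul_distrib, Finset.prod_const, Finset.card_univ]
  -- the p-group structure and root extraction
  have hQp : IsPGroup p (S ⧸ Y.subgroupOf S) := by
    intro q
    refine QuotientGroup.induction_on q (fun x => ?_)
    obtain ⟨n, hn⟩ := hXY (QuotientGroup.mk (x : X))
    refine ⟨n, ?_⟩
    have hxY : (x : X) ^ p ^ n ∈ Y := by
      rw [← QuotientGroup.eq_one_iff ((x : X) ^ p ^ n), QuotientGroup.mk_pow]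
      exact hn
    rw [← QuotientGroup.mk_pow, QuotientGroup.eq_one_iff]
    exact Subgroup.mem_subgroupOf.mpr (by push_cast; exact hxY)
  obtain ⟨n, hn⟩ := (IsPGroup.iff_card).mp hQp
  have hpn0 : p ^ n ≠ 0 := pow_ne_zero n hp.ne_zero
  have hrinj : ∀ a b : k, a ^ p ^ n = b ^ p ^ n → a = b := by
    intro a b hab
    have h := sub_pow_char_pow (R := k) (p := p) a b n
    rw [hab, sub_self] at h
    exact sub_eq_zero.mp ((pow_eq_zero_iff hpn0).mp h)
  choose rt hrt using fun a : k => IsAlgClosed.exists_pow_nat_eq a (n := p ^ n)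
    (Nat.pos_of_ne_zero hpn0)
  obtain ⟨γ, hγdef⟩ : ∃ γ : S ⧸ Y.subgroupOf S → k, ∀ q, γ q = rt (β q) := ⟨_, fun q => rfl⟩
  have hγpow : ∀ q, γ q ^ p ^ n = β q := fun q => by rw [hγdef]; exact hrt _
  have hγ0 : ∀ q, γ q ≠ 0 := by
    intro q h0
    exact hβ0 q (by rw [← hγpow q, h0, zero_pow hpn0])
  have hγmul : ∀ q r, γ q * γ r = cc q r * γ (q * r) := by
    intro q r
    apply hrinj
    rw [mul_pow, mul_pow, hγpow, hγpow, hγpow, mul_comm (β q) (β r), hβmul q r, hn]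
  -- special values at 1
  have hT1 : ∀ v, T (1 : S) v = cc 1 1 • v := by
    intro v
    apply hTinj 1
    have h2 := hTmul 1 1 v
    rw [QuotientGroup.mk_one, one_mul] at h2
    rw [map_smul]
    exact h2
  have hγ1 : γ (1 : S ⧸ Y.subgroupOf S) = cc 1 1 := by
    have h2 := hγmul 1 1
    rw [mul_one] at h2
    exact mul_right_cancel₀ (hγ0 1) h2
  -- the extension
  refine ⟨{ toFun := fun g => (γ (QuotientGroup.mk g))⁻¹ • T g,
            map_one' := ?_, map_mul' := ?_ }, ?_⟩
  · ext v
    simp only [LinearMap.smul_apply, QuotientGroup.mk_one, Module.End.one_apply]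
    rw [hT1, hγ1, smul_smul, inv_mul_cancel₀ (hcc0 1 1), one_smul]
  · intro g h
    ext v
    simp only [LinearMap.smul_apply, Module.End.mul_apply, map_smul]
    rw [hTmul g h, QuotientGroup.mk_mul, smul_smul, smul_smul]
    congr 1
    have h2 := hγmul (QuotientGroup.mk g) (QuotientGroup.mk h)
    have hg0 := hγ0 (QuotientGroup.mk g)
    have hh0 := hγ0 (QuotientGroup.mk h)
    have hgh0 := hγ0 (QuotientGroup.mk g * QuotientGroup.mk h)
    field_simp
    linear_combination h2
  · intro y hy
    have h1 : (QuotientGroup.mk y : S ⧸ Y.subgroupOf S) = 1 :=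
      (QuotientGroup.eq_one_iff _).mpr (Subgroup.mem_subgroupOf.mpr hy)
    have hTy : ∀ v, T y v = cc 1 1 • ρ ⟨(y : X), hy⟩ v := by
      intro v
      rw [hT, h1]
      have hyy : yOf y = (⟨(y : X), hy⟩ : Y) * yOf 1 := by
        ext
        push_cast [hyOf, h1, QuotientGroup.mk_one]
        rw [one_mul]
      rw [hyy, hρmul]
      have h3 : ρ (yOf 1) (Φ (s 1) v) = T (1 : S) v := by
        rw [hT, QuotientGroup.mk_one]
      rw [h3, hT1, map_smul]
    ext v
    simp only [MonoidHom.coe_mk, OneHom.coe_mk, LinearMap.smul_apply]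
    rw [hTy, h1, hγ1, smul_smul, inv_mul_cancel₀ (hcc0 1 1), one_smul]
end

section
/- Let X be a finite group, Y a normal subgroup with X/Y a p-group, k an algebraically closed field of characteristic p, N a simple kY-module that extends to a module N̂ over its stabilizer X_N. Then the induced module Ind_{X_N}^{X}(N̂) is a simple kX-module. -/
/-- The underlying space of the module induced from a subgroup `S ≤ X`
(for finite groups, realized as the space of `S`-equivariant functions `X → V`,
which is canonically the induced module). -/
def inducedCarrier (k : Type*) [CommSemiring k] {X : Type*} [Group X] (S : Subgroup X)
    {V : Type*} [AddCommMonoid V] [Module k V] (ρ : Representation k S V) :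
    Submodule k (X → V) where
  carrier := {f | ∀ (s : S) (x : X), f ((s : X) * x) = ρ s (f x)}
  add_mem' := by intro a b ha hb s x; simp [ha s x, hb s x]
  zero_mem' := by intro s x; simp
  smul_mem' := by intro c f hf s x; simp [hf s x]

/-- The induced representation `Ind_S^X`. -/
def inducedRep (k : Type*) [CommSemiring k] {X : Type*} [Group X] (S : Subgroup X)
    {V : Type*} [AddCommMonoid V] [Module k V] (ρ : Representation k S V) :
    Representation k X (inducedCarrier k S ρ) where
  toFun g :=
    { toFun := fun f => ⟨fun y => (f : X → V) (y * g), fun s x => by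
        have := f.2 s (x * g)
        simpa [mul_assoc] using this⟩
      map_add' := fun f₁ f₂ => by ext y; rfl
      map_smul' := fun c f => by ext y; rfl }
  map_one' := by ext f y; simp
  map_mul' g₁ g₂ := by ext f y; simp [mul_assoc]

section Auxiliary

variable {k : Type*} [CommSemiring k] {X : Type*} [Group X] (S : Subgroup X)
  {V : Type*} [AddCommMonoid V] [Module k V] (ρext : Representation k S V)

/-- Evaluation at a point, as a linear map on the induced carrier. -/
def evMap (x : X) : (inducedCarrier k S ρext) →ₗ[k] V where
  toFun f := (f : X → V) x
  map_add' _ _ := rfl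
  map_smul' _ _ := rfl

@[simp] lemma evMap_apply (x : X) (f : inducedCarrier k S ρext) :
    evMap S ρext x f = (f : X → V) x := rfl

lemma evMap_rep (g x : X) (f : inducedCarrier k S ρext) :
    evMap S ρext x (inducedRep k S ρext g f) = (f : X → V) (x * g) := rfl

end Auxiliary

/-- If `N` is a simple `kY`-module extending to a module over its
stabilizer `S = X_N`, then the induced module `Ind_S^X (N̂)` is a simple `kX`-module. -/
theorem induced_from_stabilizer_simple
    {p : ℕ} (hp : p.Prime) (k : Type*) [Field k] [IsAlgClosed k] [CharP k p]
    (X : Type*) [Group X] [Finite X] (Y : Subgroup X) (hY : Y.Normal)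
    (hXY : IsPGroup p (X ⧸ Y))
    (V : Type*) [AddCommGroup V] [Module k V] [FiniteDimensional k V]
    (ρ : Representation k Y V) (hρ : IsSimpleRep ρ)
    (S : Subgroup X)
    (hS : ∀ x : X, x ∈ S ↔ RepIso (ρ.comp (conjHom Y hY x)) ρ)
    (ρext : Representation k S V)
    (hext : ∀ (y : S) (hy : (y : X) ∈ Y), ρext y = ρ ⟨y, hy⟩) :
    IsSimpleRep (inducedRep k S ρext) := by
  classical
  obtain ⟨hVnt, hρsimp⟩ := hρ
  letI : Fintype X := Fintype.ofFinite X
  set M := inducedCarrier k S ρext with hMdef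
  set π := inducedRep k S ρext with hπdef
  -- Y is contained in S
  have hYS : ∀ t : X, t ∈ Y → t ∈ S := by
    intro t ht
    rw [hS]
    refine ⟨LinearEquiv.ofLinear (ρ ⟨t, ht⟩) (ρ ⟨t, ht⟩⁻¹) ?_ ?_, ?_⟩
    · rw [← Module.End.mul_eq_comp, ← map_mul, mul_inv_cancel, map_one]; rfl
    · rw [← Module.End.mul_eq_comp, ← map_mul, inv_mul_cancel, map_one]; rfl
    · intro a v
      show ρ ⟨t, ht⟩ ((ρ.comp (conjHom Y hY t)) a v) = ρ a (ρ ⟨t, ht⟩ v)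
      have h1 : (⟨t, ht⟩ : Y) * (conjHom Y hY t a) = a * ⟨t, ht⟩ := by
        ext; simp [conjHom, mul_assoc]
      calc ρ ⟨t, ht⟩ ((ρ.comp (conjHom Y hY t)) a v)
          = ρ ((⟨t, ht⟩ : Y) * (conjHom Y hY t a)) v := by rw [map_mul]; rfl
        _ = ρ (a * ⟨t, ht⟩) v := by rw [h1]
        _ = ρ a (ρ ⟨t, ht⟩ v) := by rw [map_mul]; rfl
  have memY : ∀ (x : X) (t : Y), x * (t : X) * x⁻¹ ∈ Y := by
    intro x t; simpa using hY.conj_mem (t : X) t.2 x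
  -- the key equivariance fact for evaluations
  have hevF : ∀ (x : X) (t : Y) (f : M),
      evMap S ρext x (π (t : X) f) = ρ ⟨x * t * x⁻¹, memY x t⟩ (evMap S ρext x f) := by
    intro x t f
    have h2 : x * (t : X) = ((⟨x * t * x⁻¹, hYS _ (memY x t)⟩ : S) : X) * x := by group
    have h3 : evMap S ρext x (π (t : X) f) = (f : X → V) (x * (t : X)) := rfl
    have h4 : (f : X → V) (x * (t : X))
        = (f : X → V) (((⟨x * t * x⁻¹, hYS _ (memY x t)⟩ : S) : X) * x) :=
      congrArg (f : X → V) h2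
    rw [h3, h4, f.2 ⟨x * t * x⁻¹, hYS _ (memY x t)⟩ x,
      hext ⟨x * t * x⁻¹, hYS _ (memY x t)⟩ (memY x t)]
    rfl
  constructor
  · -- Nontriviality of the induced module
    obtain ⟨v, hv⟩ := exists_ne (0 : V)
    have hmemS : ∀ (s : S) (x : X), (s : X) * x ∈ S ↔ x ∈ S := by
      intro s x
      constructor
      · intro h; have := mul_mem (inv_mem s.2) h; simpa [mul_assoc] using this
      · intro h; exact mul_mem s.2 h
    refine ⟨⟨⟨fun x => if h : x ∈ S then ρext ⟨x, h⟩ v else 0, ?_⟩, 0, ?_⟩⟩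
    · intro s x
      dsimp only
      by_cases h : x ∈ S
      · rw [dif_pos ((hmemS s x).mpr h), dif_pos h]
        have : (⟨(s : X) * x, (hmemS s x).mpr h⟩ : S) = s * ⟨x, h⟩ := rfl
        rw [this, map_mul]; rfl
      · rw [dif_neg (fun hc => h ((hmemS s x).mp hc)), dif_neg h, map_zero]
    · intro hc
      apply hv
      have h0 := congrFun (congrArg Subtype.val hc) 1
      dsimp only at h0
      rw [dif_pos (one_mem S)] at h0
      have h1 : (⟨(1 : X), one_mem S⟩ : S) = 1 := rfl
      rw [h1, map_one] at h0
      exact h0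
  -- main part: every invariant submodule is ⊥ or ⊤
  intro W hW
  by_cases hW0 : W = ⊥
  · left; exact hW0
  right
  -- Step A: find a minimal nonzero Y-invariant submodule of W
  set P : Submodule k M → Prop :=
    fun U => U ≤ W ∧ U ≠ ⊥ ∧ ∀ (t : Y) (f : M), f ∈ U → π (t : X) f ∈ U with hPdef
  have hQ : ∃ n, ∃ U, P U ∧ Module.finrank k U = n :=
    ⟨_, W, ⟨le_refl _, hW0, fun t f hf => hW (t : X) f hf⟩, rfl⟩
  obtain ⟨U, hUP, hUrank⟩ := Nat.find_spec hQ
  have hmin : ∀ U' : Submodule k M, P U' → Nat.find hQ ≤ Module.finrank k U' :=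
    fun U' h => Nat.find_min' hQ ⟨U', h, rfl⟩
  obtain ⟨u, huU, hune⟩ := Submodule.ne_bot_iff U |>.mp hUP.2.1
  obtain ⟨x, hx⟩ : ∃ x : X, (u : X → V) x ≠ 0 := by
    by_contra hc
    push_neg at hc
    exact hune (Subtype.ext (funext hc))
  -- kernel triviality on U
  have hker : ∀ f ∈ U, (f : X → V) x = 0 → f = 0 := by
    intro f hf hfx
    by_contra hne
    set K := U ⊓ LinearMap.ker (evMap S ρext x) with hKdef
    have hKP : P K := by
      refine ⟨le_trans inf_le_left hUP.1, ?_, ?_⟩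
      · rw [Submodule.ne_bot_iff]
        exact ⟨f, ⟨hf, LinearMap.mem_ker.mpr hfx⟩, hne⟩
      · intro t g hg
        refine ⟨hUP.2.2 t g hg.1, LinearMap.mem_ker.mpr ?_⟩
        rw [hevF x t g]
        have : evMap S ρext x g = 0 := hg.2
        rw [this, map_zero]
    have hKU : K = U := by
      apply Submodule.eq_of_le_of_finrank_le inf_le_left
      rw [hUrank]; exact hmin K hKP
    have : evMap S ρext x u = 0 := (hKU ▸ huU : u ∈ K).2
    exact hx this
  -- surjectivity of evaluation on U
  have hsurj : ∀ v : V, ∃ f ∈ U, (f : X → V) x = v := by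
    have hRinv : RepInvariant ρ (Submodule.map (evMap S ρext x) U) := by
      intro t v hv
      obtain ⟨f, hf, rfl⟩ := hv
      refine ⟨π ((⟨x⁻¹ * t * x, by simpa using hY.conj_mem (t : X) t.2 x⁻¹⟩ : Y) : X) f,
        hUP.2.2 _ f hf, ?_⟩
      rw [hevF]
      congr 1
      ext
      simp [mul_assoc]
    have hRtop : Submodule.map (evMap S ρext x) U = ⊤ := by
      rcases hρsimp _ hRinv with h | h
      · exfalso
        have : evMap S ρext x u ∈ Submodule.map (evMap S ρext x) U :=
          ⟨u, huU, rfl⟩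
        rw [h] at this
        exact hx (by simpa using this)
      · exact h
    intro v
    have : v ∈ Submodule.map (evMap S ρext x) U := hRtop ▸ Submodule.mem_top
    obtain ⟨f, hf, hfv⟩ := this
    exact ⟨f, hf, hfv⟩
  -- Step A': construct the equivariant embedding φ : V → M with range in W
  have hφ : ∃ φ : V →ₗ[k] M, (∀ v, φ v ∈ W) ∧
      (∀ (t : Y) (v : V), φ (ρ t v) = π (t : X) (φ v)) ∧ ∃ v₀, φ v₀ ≠ 0 := by
    have hbij : Function.Bijective ((evMap S ρext x) ∘ₗ U.subtype) := by
      constructor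
      · intro a b hab
        have hmem : ((a : M) - (b : M)) ∈ U := sub_mem a.2 b.2
        have hz : ((((a : M) - (b : M)) : M) : X → V) x = 0 := by
          have : (a : M) - (b : M) = (a : M) - (b : M) := rfl
          show evMap S ρext x ((a : M) - (b : M)) = 0
          rw [map_sub]
          simpa using congrArg (fun w => w - evMap S ρext x (b : M)) hab
        have := hker _ hmem hz
        exact Subtype.ext (sub_eq_zero.mp this)
      · intro v
        obtain ⟨f, hf, hfv⟩ := hsurj v
        exact ⟨⟨f, hf⟩, hfv⟩
    set e := LinearEquiv.ofBijective _ hbij with hedef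
    set φ₁ : V →ₗ[k] M := U.subtype ∘ₗ e.symm.toLinearMap with hφ₁def
    have hφ₁U : ∀ v, φ₁ v ∈ U := fun v => (e.symm v).2
    have hevφ₁ : ∀ v, evMap S ρext x (φ₁ v) = v := by
      intro v
      exact e.apply_symm_apply v
    have hφ₁eq : ∀ (t : Y) (v : V),
        φ₁ (ρ t v) = π ((⟨x⁻¹ * t * x, by simpa using hY.conj_mem (t : X) t.2 x⁻¹⟩ : Y) : X) (φ₁ v) := by
      intro t v
      set t' : Y := ⟨x⁻¹ * t * x, by simpa using hY.conj_mem (t : X) t.2 x⁻¹⟩ with ht'def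
      have hmem : φ₁ (ρ t v) - π (t' : X) (φ₁ v) ∈ U :=
        sub_mem (hφ₁U _) (hUP.2.2 t' _ (hφ₁U v))
      have hz : evMap S ρext x (φ₁ (ρ t v) - π (t' : X) (φ₁ v)) = 0 := by
        rw [map_sub, hevφ₁, hevF x t' (φ₁ v), hevφ₁]
        have : (⟨x * t' * x⁻¹, memY x t'⟩ : Y) = t := by
          ext; simp [ht'def]; group
        rw [this, sub_self]
      have := hker _ hmem hz
      exact sub_eq_zero.mp this
    have hπinv : ∀ (g : X) (m : M), π g⁻¹ (π g m) = m := by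
      intro g m
      rw [← Module.End.mul_apply, ← map_mul, inv_mul_cancel, map_one, Module.End.one_apply]
    refine ⟨(π x : M →ₗ[k] M) ∘ₗ φ₁, ?_, ?_, ?_⟩
    · intro v
      exact hW x _ (hUP.1 (hφ₁U v))
    · intro t v
      set t' : Y := ⟨x⁻¹ * t * x, by simpa using hY.conj_mem (t : X) t.2 x⁻¹⟩ with ht'def
      show π x (φ₁ (ρ t v)) = π (t : X) (π x (φ₁ v))
      rw [hφ₁eq t v]
      rw [← Module.End.mul_apply, ← Module.End.mul_apply, ← map_mul, ← map_mul]
      congr 2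
      show x * (x⁻¹ * (t : X) * x) = (t : X) * x
      group
    · obtain ⟨v₀, hv₀⟩ := exists_ne (0 : V)
      refine ⟨v₀, fun hc => hv₀ ?_⟩
      have h1 : π x⁻¹ (π x (φ₁ v₀)) = 0 := by
        show π x⁻¹ ((π x : M →ₗ[k] M).comp φ₁ v₀) = 0
        rw [hc, map_zero]
      rw [hπinv] at h1
      have := hevφ₁ v₀
      rw [h1, map_zero] at this
      exact this.symm
  obtain ⟨φ, hφW, hφeq, v₀, hv₀⟩ := hφ
  -- Step B: the image of φ is supported on S
  have hφS : ∀ z : X, z ∉ S → ∀ v : V, (φ v : X → V) z = 0 := by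
    intro z hz
    by_contra hc
    push_neg at hc
    obtain ⟨v₁, hv₁⟩ := hc
    set ψ : V →ₗ[k] V := (evMap S ρext z) ∘ₗ φ with hψdef
    have hψv₁ : ψ v₁ ≠ 0 := hv₁
    have hψeq : ∀ (t : Y) (v : V), ψ (ρ t v) = ρ ⟨z * t * z⁻¹, memY z t⟩ (ψ v) := by
      intro t v
      show evMap S ρext z (φ (ρ t v)) = _
      rw [hφeq t v, hevF z t (φ v)]
      rfl
    have hkerψ : LinearMap.ker ψ = ⊥ := by
      have hinv : RepInvariant ρ (LinearMap.ker ψ) := by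
        intro t v hv
        rw [LinearMap.mem_ker] at hv ⊢
        rw [hψeq t v, hv, map_zero]
      rcases hρsimp _ hinv with h | h
      · exact h
      · exfalso
        apply hψv₁
        have : v₁ ∈ LinearMap.ker ψ := h ▸ Submodule.mem_top
        exact LinearMap.mem_ker.mp this
    have hrangeψ : LinearMap.range ψ = ⊤ := by
      have hinv : RepInvariant ρ (LinearMap.range ψ) := by
        intro t v hv
        obtain ⟨u, rfl⟩ := hv
        set t' : Y := ⟨z⁻¹ * t * z, by simpa using hY.conj_mem (t : X) t.2 z⁻¹⟩ with ht'def
        have h1 : ρ t (ψ u) = ψ (ρ t' u) := by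
          rw [hψeq t' u]
          congr 1
          ext
          simp [ht'def]
          group
        rw [h1]
        exact ⟨ρ t' u, rfl⟩
      rcases hρsimp _ hinv with h | h
      · exfalso
        apply hψv₁
        have : ψ v₁ ∈ LinearMap.range ψ := ⟨v₁, rfl⟩
        rw [h] at this
        simpa using this
      · exact h
    have hbij : Function.Bijective ψ :=
      ⟨LinearMap.ker_eq_bot.mp hkerψ, LinearMap.range_eq_top.mp hrangeψ⟩
    apply hz
    rw [hS z]
    refine ⟨LinearEquiv.ofBijective ψ hbij, ?_⟩
    intro a v
    show ψ ((ρ.comp (conjHom Y hY z)) a v) = ρ a (ψ v)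
    have h2 : (ρ.comp (conjHom Y hY z)) a v = ρ (conjHom Y hY z a) v := rfl
    have h3 : (⟨z * ((conjHom Y hY z a : Y) : X) * z⁻¹, memY z (conjHom Y hY z a)⟩ : Y) = a := by
      ext
      show z * (z⁻¹ * (a : X) * z) * z⁻¹ = (a : X)
      group
    rw [h2, hψeq (conjHom Y hY z a) v, h3]
  -- the submodule of functions supported on S
  set C1 : Submodule k M :=
    { carrier := {f : M | ∀ z : X, z ∉ S → (f : X → V) z = 0}
      add_mem' := by
        intro a b ha hb z hzS
        have h1 : ((a + b : M) : X → V) z = (a : X → V) z + (b : X → V) z := rfl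
        rw [h1, ha z hzS, hb z hzS, add_zero]
      zero_mem' := fun z _ => rfl
      smul_mem' := by
        intro c f hf z hzS
        have h1 : ((c • f : M) : X → V) z = c • (f : X → V) z := rfl
        rw [h1, hf z hzS, smul_zero] } with hC1def
  have hC1ev1 : ∀ f : M, f ∈ C1 → (f : X → V) 1 = 0 → f = 0 := by
    intro f hf h1
    apply Subtype.ext
    funext z
    show (f : X → V) z = 0
    by_cases hz : z ∈ S
    · have h2 := f.2 ⟨z, hz⟩ 1
      rw [mul_one] at h2
      rw [h2, h1, map_zero]
    · exact hf z hz
  -- Step C: C1 is contained in W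
  have hE : Submodule.map (evMap S ρext 1) (W ⊓ C1) = ⊤ := by
    have hEinv : RepInvariant ρ (Submodule.map (evMap S ρext 1) (W ⊓ C1)) := by
      intro t v hv
      obtain ⟨f, ⟨hfW, hfC⟩, rfl⟩ := hv
      refine ⟨π (t : X) f, ⟨hW _ _ hfW, ?_⟩, ?_⟩
      · intro z hz
        show (f : X → V) (z * t) = 0
        apply hfC
        intro hc
        apply hz
        have := mul_mem hc (inv_mem (hYS t t.2))
        simpa [mul_assoc] using this
      · rw [hevF 1 t f]
        congr 1
        ext
        simp
    rcases hρsimp _ hEinv with h | h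
    · exfalso
      have hwW : φ v₀ ∈ W := hφW v₀
      have hwC : φ v₀ ∈ C1 := fun z hz => hφS z hz v₀
      have hmem : evMap S ρext 1 (φ v₀) ∈ Submodule.map (evMap S ρext 1) (W ⊓ C1) :=
        ⟨φ v₀, ⟨hwW, hwC⟩, rfl⟩
      rw [h] at hmem
      have hev0 : (φ v₀ : X → V) 1 = 0 := by simpa using hmem
      exact hv₀ (hC1ev1 _ hwC hev0)
    · exact h
  have hC1W : ∀ f : M, f ∈ C1 → f ∈ W := by
    intro f hf
    have hmem : (f : X → V) 1 ∈ Submodule.map (evMap S ρext 1) (W ⊓ C1) := by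
      rw [hE]; trivial
    obtain ⟨g, ⟨hgW, hgC⟩, hg1⟩ := hmem
    have hg1' : (g : X → V) 1 = (f : X → V) 1 := hg1
    have hfg : f - g = 0 := by
      apply hC1ev1
      · intro z hz
        show (f : X → V) z - (g : X → V) z = 0
        rw [hf z hz, hgC z hz, sub_zero]
      · show (f : X → V) 1 - (g : X → V) 1 = 0
        rw [hg1', sub_self]
    have : f = g := by rwa [sub_eq_zero] at hfg
    rw [this]; exact hgW
  -- Step D: W is everything
  have key : ∀ n : ℕ, ∀ f : M,
      (Finset.univ.filter (fun z => (f : X → V) z ≠ 0)).card ≤ n → f ∈ W := by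
    intro n
    induction n with
    | zero =>
      intro f hf
      have hfz : f = 0 := by
        apply Subtype.ext
        funext z
        by_contra hzne
        have hzmem : z ∈ Finset.univ.filter (fun z => (f : X → V) z ≠ 0) :=
          Finset.mem_filter.mpr ⟨Finset.mem_univ z, hzne⟩
        have := Finset.card_eq_zero.mp (Nat.le_zero.mp hf)
        rw [this] at hzmem
        exact Finset.notMem_empty z hzmem
      rw [hfz]
      exact zero_mem W
    | succ n ih =>
      intro f hf
      by_cases h0 : f = 0
      · rw [h0]; exact zero_mem W
      have hex : ∃ x₀ : X, (f : X → V) x₀ ≠ 0 := by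
        by_contra hc
        push_neg at hc
        exact h0 (Subtype.ext (funext hc))
      obtain ⟨x₀, hx₀⟩ := hex
      set h : M := ⟨fun y => if y ∈ S then (f : X → V) (y * x₀) else 0, by
        intro s y
        dsimp only
        by_cases hy : y ∈ S
        · have hsy : (s : X) * y ∈ S := mul_mem s.2 hy
          rw [if_pos hsy, if_pos hy]
          have : (s : X) * y * x₀ = (s : X) * (y * x₀) := by rw [mul_assoc]
          rw [this, f.2 s (y * x₀)]
        · have hsy : (s : X) * y ∉ S := by
            intro hc
            apply hy
            have := mul_mem (inv_mem s.2) hc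
            simpa [mul_assoc] using this
          rw [if_neg hsy, if_neg hy, map_zero]⟩ with hhdef
      have hhC1 : h ∈ C1 := by
        intro z hz
        show (if z ∈ S then (f : X → V) (z * x₀) else 0) = 0
        rw [if_neg hz]
      set f₁ : M := π x₀⁻¹ h with hf₁def
      have hf₁W : f₁ ∈ W := hW x₀⁻¹ h (hC1W h hhC1)
      have hf₁val : ∀ y : X, (f₁ : X → V) y =
          if y * x₀⁻¹ ∈ S then (f : X → V) y else 0 := by
        intro y
        have h1 : (f₁ : X → V) y = (h : X → V) (y * x₀⁻¹) := rfl
        rw [h1]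
        show (if y * x₀⁻¹ ∈ S then (f : X → V) (y * x₀⁻¹ * x₀) else 0) = _
        by_cases hy : y * x₀⁻¹ ∈ S
        · rw [if_pos hy, if_pos hy]
          congr 1
          group
        · rw [if_neg hy, if_neg hy]
      have hsub : (Finset.univ.filter (fun z => ((f - f₁ : M) : X → V) z ≠ 0)) ⊆
          (Finset.univ.filter (fun z => (f : X → V) z ≠ 0)).erase x₀ := by
        intro y hy
        rw [Finset.mem_filter] at hy
        have hy2 := hy.2
        have hval : ((f - f₁ : M) : X → V) y = (f : X → V) y - (f₁ : X → V) y := rfl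
        rw [hval, hf₁val y] at hy2
        by_cases hyS : y * x₀⁻¹ ∈ S
        · exfalso
          rw [if_pos hyS, sub_self] at hy2
          exact hy2 rfl
        · rw [if_neg hyS, sub_zero] at hy2
          refine Finset.mem_erase.mpr ⟨?_, Finset.mem_filter.mpr ⟨Finset.mem_univ y, hy2⟩⟩
          intro hc
          apply hyS
          rw [hc]
          simpa using one_mem S
      have hcard : (Finset.univ.filter (fun z => ((f - f₁ : M) : X → V) z ≠ 0)).card ≤ n := by
        have h1 := Finset.card_le_card hsub
        have h2 : ((Finset.univ.filter (fun z => (f : X → V) z ≠ 0)).erase x₀).card =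
            (Finset.univ.filter (fun z => (f : X → V) z ≠ 0)).card - 1 :=
          Finset.card_erase_of_mem (Finset.mem_filter.mpr ⟨Finset.mem_univ x₀, hx₀⟩)
        omega
      have hsubW : f - f₁ ∈ W := ih _ hcard
      have : f = (f - f₁) + f₁ := by abel
      rw [this]
      exact add_mem hsubW hf₁W
  apply eq_top_iff.mpr
  intro f _
  exact key _ f le_rfl
end

section
/- Let X be a finite group, Y a normal subgroup with X/Y a p-group, and k an algebraically closed field of characteristic p. Then every simple kX-module M is isomorphic to Ind_{X_N}^{X}(N̂) for some simple kY-module N occurring in the restriction of M to Y and some extension N̂ of N to the stabilizer X_N. -/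
set_option linter.unusedSectionVars false
set_option maxHeartbeats 1000000


/-- The subrepresentation on an invariant submodule. -/
def subRep {k G V : Type*} [CommSemiring k] [Monoid G] [AddCommMonoid V] [Module k V]
    (ρ : Representation k G V) (W : Submodule k V) (h : RepInvariant ρ W) :
    Representation k G W where
  toFun g := (ρ g).restrict (h g)
  map_one' := by ext w; simp [LinearMap.restrict_apply]
  map_mul' g₁ g₂ := by ext w; simp [LinearMap.restrict_apply]

namespace Aux

variable {k G V V₁ V₂ V₃ : Type*}

section basic
variable [CommSemiring k] [Monoid G] [AddCommMonoid V] [Module k V]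
  [AddCommMonoid V₁] [Module k V₁] [AddCommMonoid V₂] [Module k V₂]
  [AddCommMonoid V₃] [Module k V₃]

theorem rep_mul_apply (ρ : Representation k G V) (a b : G) (v : V) :
    ρ a (ρ b v) = ρ (a * b) v := by rw [map_mul]; rfl

theorem repIso_refl (ρ : Representation k G V) : RepIso ρ ρ :=
  ⟨LinearEquiv.refl k V, fun _ _ => rfl⟩

theorem repIso_symm {ρ₁ : Representation k G V₁} {ρ₂ : Representation k G V₂}
    (h : RepIso ρ₁ ρ₂) : RepIso ρ₂ ρ₁ := by
  obtain ⟨e, he⟩ := h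
  refine ⟨e.symm, fun g v => ?_⟩
  have := he g (e.symm v)
  rw [e.apply_symm_apply] at this
  rw [← this, e.symm_apply_apply]

theorem repIso_trans {ρ₁ : Representation k G V₁} {ρ₂ : Representation k G V₂}
    {ρ₃ : Representation k G V₃} (h₁ : RepIso ρ₁ ρ₂) (h₂ : RepIso ρ₂ ρ₃) : RepIso ρ₁ ρ₃ := by
  obtain ⟨e, he⟩ := h₁; obtain ⟨f, hf⟩ := h₂
  exact ⟨e.trans f, fun g v => by simp [he, hf]⟩

@[simp] theorem subRep_coe_apply {ρ : Representation k G V} {W : Submodule k V}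
    (h : RepInvariant ρ W) (g : G) (w : W) : (subRep ρ W h g w : V) = ρ g (w : V) := rfl

theorem repIso_simple {ρ₁ : Representation k G V₁} {ρ₂ : Representation k G V₂}
    (h : RepIso ρ₁ ρ₂) (hs : IsSimpleRep ρ₁) : IsSimpleRep ρ₂ := by
  obtain ⟨e, he⟩ := h
  obtain ⟨hnt, hsub⟩ := hs
  constructor
  · exact e.symm.toEquiv.nontrivial
  · intro W hW
    have hWc : RepInvariant ρ₁ (W.comap (e : V₁ →ₗ[k] V₂)) := by
      intro g v hv
      simp only [Submodule.mem_comap, LinearEquiv.coe_coe] at hv ⊢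
      rw [he]
      exact hW g _ hv
    rcases hsub _ hWc with h | h
    · left
      rw [Submodule.eq_bot_iff] at h ⊢
      intro x hx
      have : e.symm x ∈ W.comap (e : V₁ →ₗ[k] V₂) := by simp [Submodule.mem_comap, hx]
      have := h _ this
      simpa using congrArg e this
    · right
      rw [Submodule.eq_top_iff'] at h ⊢
      intro x
      have := h (e.symm x)
      simpa using this

/-- transfer of iso along `comp` with a monoid hom. -/
theorem repIso_comp_congr {G' : Type*} [Monoid G'] (f : G' →* G)
    {ρ₁ : Representation k G V₁} {ρ₂ : Representation k G V₂}
    (h : RepIso ρ₁ ρ₂) : RepIso (ρ₁.comp f) (ρ₂.comp f) := by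
  obtain ⟨e, he⟩ := h
  exact ⟨e, fun g v => he (f g) v⟩

end basic

section schur
variable [Field k] [IsAlgClosed k] [Monoid G]
  [AddCommGroup V₁] [Module k V₁] [AddCommGroup V₂] [Module k V₂]

/-- Schur: equivariant endomorphism of a simple finite-dimensional rep is scalar. -/
theorem schur_scalar [FiniteDimensional k V₁] {ρ : Representation k G V₁}
    (hρ : IsSimpleRep ρ) (f : V₁ →ₗ[k] V₁) (hf : ∀ g v, f (ρ g v) = ρ g (f v)) :
    ∃ c : k, ∀ v, f v = c • v := by
  haveI : Nontrivial V₁ := hρ.1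
  obtain ⟨c, hc⟩ := Module.End.exists_eigenvalue f
  refine ⟨c, fun v => ?_⟩
  set K : Submodule k V₁ := LinearMap.ker (f - c • LinearMap.id) with hK
  have hKinv : RepInvariant ρ K := by
    intro g v hv
    simp only [hK, LinearMap.mem_ker, LinearMap.sub_apply, LinearMap.smul_apply,
      LinearMap.id_apply, sub_eq_zero] at hv ⊢
    rw [hf, hv, map_smul]
  have hKne : K ≠ ⊥ := by
    obtain ⟨w, hw⟩ := hc.exists_hasEigenvector
    intro hbot
    apply hw.2
    have : w ∈ K := by
      simp [hK, LinearMap.mem_ker, sub_eq_zero, hw.apply_eq_smul]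
    rw [hbot] at this
    simpa using this
  rcases hρ.2 K hKinv with h | h
  · exact absurd h hKne
  · have hv : v ∈ K := h ▸ Submodule.mem_top
    simpa [hK, LinearMap.mem_ker, sub_eq_zero] using hv

/-- Schur: a nonzero equivariant map between simple reps is a `RepIso`. -/
theorem schur_iso {ρ₁ : Representation k G V₁} {ρ₂ : Representation k G V₂}
    (h₁ : IsSimpleRep ρ₁) (h₂ : IsSimpleRep ρ₂) (f : V₁ →ₗ[k] V₂)
    (hf : ∀ g v, f (ρ₁ g v) = ρ₂ g (f v)) (hne : f ≠ 0) : RepIso ρ₁ ρ₂ := by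
  have hker : RepInvariant ρ₁ (LinearMap.ker f) := by
    intro g v hv
    simp only [LinearMap.mem_ker] at hv ⊢
    rw [hf, hv, map_zero]
  have hrange : RepInvariant ρ₂ (LinearMap.range f) := by
    rintro g v ⟨w, rfl⟩
    exact ⟨ρ₁ g w, (hf g w)⟩
  have hker' : LinearMap.ker f = ⊥ := by
    rcases h₁.2 _ hker with h | h
    · exact h
    · exfalso; apply hne
      ext v
      have : v ∈ LinearMap.ker f := h ▸ Submodule.mem_top
      simpa using this
  have hrange' : LinearMap.range f = ⊤ := by
    rcases h₂.2 _ hrange with h | h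
    · exfalso; apply hne
      rw [← LinearMap.range_eq_bot]; exact h
    · exact h
  have hbij : Function.Bijective f :=
    ⟨LinearMap.ker_eq_bot.mp hker', LinearMap.range_eq_top.mp hrange'⟩
  exact ⟨LinearEquiv.ofBijective f hbij, fun g v => hf g v⟩

end schur

section exists_simple
variable [Field k] [Monoid G] [AddCommGroup V] [Module k V] [FiniteDimensional k V]

/-- every nonzero f.d. rep has a simple subrepresentation. -/
theorem exists_simple_subRep (ρ : Representation k G V) [Nontrivial V] :
    ∃ (W : Submodule k V) (hW : RepInvariant ρ W), IsSimpleRep (subRep ρ W hW) := by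
  classical
  set 𝒮 : Set (Submodule k V) := {W | RepInvariant ρ W ∧ W ≠ ⊥} with h𝒮
  have htop : (⊤ : Submodule k V) ∈ 𝒮 := by
    constructor
    · intro g v _; trivial
    · rw [Submodule.ne_bot_iff]
      obtain ⟨x, hx⟩ := exists_ne (0 : V)
      exact ⟨x, trivial, hx⟩
  set ns : Set ℕ := (fun W : Submodule k V => Module.finrank k W) '' 𝒮 with hns
  have hne : ns.Nonempty := ⟨_, ⟨⊤, htop, rfl⟩⟩
  obtain ⟨W, hW𝒮, hWrank⟩ := Nat.sInf_mem hne
  refine ⟨W, hW𝒮.1, ?_, ?_⟩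
  · rcases Submodule.ne_bot_iff W |>.mp hW𝒮.2 with ⟨x, hx, hx0⟩
    exact ⟨⟨x, hx⟩, 0, by simp [Subtype.ext_iff, hx0]⟩
  · intro W₂ hW₂
    by_cases hbot : W₂ = ⊥
    · left; exact hbot
    right
    set W₂' : Submodule k V := W₂.map W.subtype with hW₂'
    have hle : W₂' ≤ W := by
      rintro v ⟨u, hu, rfl⟩; exact u.2
    have hW₂'inv : RepInvariant ρ W₂' := by
      rintro g v ⟨u, hu, rfl⟩
      exact ⟨subRep ρ W hW𝒮.1 g u, hW₂ g u hu, rfl⟩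
    have hW₂'ne : W₂' ≠ ⊥ := by
      rcases Submodule.ne_bot_iff W₂ |>.mp hbot with ⟨u, hu, hu0⟩
      rw [Submodule.ne_bot_iff]
      exact ⟨(u : V), ⟨u, hu, rfl⟩, by simpa [Submodule.coe_eq_zero] using hu0⟩
    have hmem : Module.finrank k W₂' ∈ ns := ⟨W₂', ⟨hW₂'inv, hW₂'ne⟩, rfl⟩
    have hle2 : Module.finrank k W ≤ Module.finrank k W₂' := by
      rw [show Module.finrank k W = sInf ns from hWrank]
      exact Nat.sInf_le hmem
    have heq : W₂' = W := Submodule.eq_of_le_of_finrank_le hle hle2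
    rw [Submodule.eq_top_iff']
    intro u
    have hu2 : (u : V) ∈ W₂' := by rw [heq]; exact u.2
    obtain ⟨u', hu', hh⟩ := hu2
    exact (show u' = u from Subtype.ext hh) ▸ hu'

end exists_simple

section fixedvec

/-- a finite p-group acting k-linearly on a nonzero vector space in char p has a
nonzero fixed vector. -/
theorem exists_fixed_vector {p : ℕ} (hp : p.Prime) (k : Type*) [Field k] [CharP k p]
    {P : Type*} [Group P] [Finite P] (hP : IsPGroup p P)
    {E : Type*} [AddCommGroup E] [Module k E] [Nontrivial E]
    (U : P → E →ₗ[k] E) (hU1 : ∀ v, U 1 v = v) (hUm : ∀ c d v, U c (U d v) = U (c * d) v) :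
    ∃ v : E, v ≠ 0 ∧ ∀ c, U c v = v := by
  classical
  haveI : Fact p.Prime := ⟨hp⟩
  obtain ⟨v₀, hv₀⟩ := exists_ne (0 : E)
  letI : Module (ZMod p) E := Module.compHom E (ZMod.castHom dvd_rfl k)
  have hzsmul : ∀ (z : ZMod p) (v : E), z • v = (ZMod.castHom dvd_rfl k z) • v := fun _ _ => rfl
  set O : Set E := Set.range (fun c : P => U c v₀) with hO
  set V₀ : Submodule (ZMod p) E := Submodule.span (ZMod p) O with hV₀
  haveI : Module.Finite (ZMod p) V₀ := Module.Finite.span_of_finite _ (Set.finite_range _)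
  haveI : Finite V₀ := Module.finite_of_finite (ZMod p)
  have hUV₀ : ∀ c, ∀ v ∈ V₀, U c v ∈ V₀ := by
    intro c v hv
    induction hv using Submodule.span_induction with
    | mem x hx =>
      obtain ⟨d, rfl⟩ := hx
      exact Submodule.subset_span ⟨c * d, (hUm c d v₀).symm⟩
    | zero => simpa using Submodule.zero_mem V₀
    | add x y _ _ hx hy => rw [map_add]; exact Submodule.add_mem _ hx hy
    | smul z x _ hx =>
      rw [hzsmul, map_smul, ← hzsmul]
      exact Submodule.smul_mem _ _ hx
  letI : MulAction P V₀ :=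
    { smul := fun c v => ⟨U c v, hUV₀ c _ v.2⟩
      one_smul := fun v => Subtype.ext (hU1 v)
      mul_smul := fun c d v => Subtype.ext (hUm c d v).symm }
  have hsmul_def : ∀ (c : P) (v : V₀), ((c • v : V₀) : E) = U c v := fun _ _ => rfl
  have h0fix : (0 : V₀) ∈ MulAction.fixedPoints P V₀ := by
    intro c
    apply Subtype.ext
    rw [hsmul_def]
    simp
  have hmod := hP.card_modEq_card_fixedPoints (α := V₀)
  -- p divides card V₀
  have hv₀V : v₀ ∈ V₀ := Submodule.subset_span ⟨1, hU1 v₀⟩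
  have hpdvd : p ∣ Nat.card V₀ := by
    haveI : Fintype V₀ := Fintype.ofFinite _
    set x : V₀ := ⟨v₀, hv₀V⟩ with hx
    have hxne : x ≠ 0 := by
      intro h; exact hv₀ (by simpa [hx, Subtype.ext_iff] using h)
    have hxp : p • x = 0 := by
      apply Subtype.ext
      push_cast
      rw [← Nat.cast_smul_eq_nsmul k p (x : E), CharP.cast_eq_zero k p, zero_smul]
    have hdvd : addOrderOf x ∣ p := addOrderOf_dvd_of_nsmul_eq_zero hxp
    have hord : addOrderOf x = p := by
      rcases (Nat.Prime.eq_one_or_self_of_dvd hp _ hdvd) with h | h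
      · exact absurd (AddMonoid.addOrderOf_eq_one_iff.mp h) hxne
      · exact h
    have h := addOrderOf_dvd_card (x := x)
    rw [hord] at h
    rw [Nat.card_eq_fintype_card]
    exact h
  have hfixdvd : p ∣ Nat.card (MulAction.fixedPoints P V₀) := by
    exact (Nat.modEq_zero_iff_dvd).mp (hmod.symm.trans ((Nat.modEq_zero_iff_dvd).mpr hpdvd))
  haveI : Fintype (MulAction.fixedPoints P V₀) := Fintype.ofFinite _
  have hpos : 0 < Fintype.card (MulAction.fixedPoints P V₀) :=
    Fintype.card_pos_iff.mpr ⟨⟨(0 : V₀), h0fix⟩⟩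
  have hcard1 : 1 < Fintype.card (MulAction.fixedPoints P V₀) := by
    rcases Nat.lt_or_ge 1 (Fintype.card (MulAction.fixedPoints P V₀)) with h | h
    · exact h
    · exfalso
      have hone : Fintype.card (MulAction.fixedPoints P V₀) = 1 := le_antisymm h hpos
      rw [Nat.card_eq_fintype_card, hone] at hfixdvd
      exact hp.one_lt.ne' (Nat.dvd_one.mp hfixdvd)
  obtain ⟨y, hy⟩ := Fintype.exists_ne_of_one_lt_card hcard1 ⟨(0 : V₀), h0fix⟩
  refine ⟨(y : V₀), ?_, ?_⟩
  · intro h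
    apply hy
    apply Subtype.ext; apply Subtype.ext
    simpa using h
  · intro c
    have := y.2 c
    have := congrArg (Subtype.val) this
    rw [hsmul_def] at this
    exact this

end fixedvec

section roots
variable {p : ℕ} [Field k] [IsAlgClosed k] [CharP k p]

theorem pow_p_injective (hp : p.Prime) (n : ℕ) :
    Function.Injective (fun x : k => x ^ p ^ n) := by
  haveI : Fact p.Prime := ⟨hp⟩
  haveI : ExpChar k p := inferInstance
  have : (fun x : k => x ^ p ^ n) = (frobenius k p)^[n] := by
    funext x; rw [iterate_frobenius]
  rw [this]
  exact Function.Injective.iterate (frobenius k p).injective n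

theorem exists_unique_root (hp : p.Prime) (n : ℕ) (u : kˣ) :
    ∃ v : kˣ, v ^ p ^ n = u := by
  obtain ⟨z, hz⟩ := IsAlgClosed.exists_pow_nat_eq (u : k) (n := p ^ n)
    (pow_pos hp.pos n)
  have hz0 : z ≠ 0 := by
    intro h; rw [h, zero_pow (pow_pos hp.pos n).ne'] at hz; exact u.ne_zero hz.symm
  exact ⟨Units.mk0 z hz0, by ext; push_cast; exact hz⟩

theorem units_pow_p_injective (hp : p.Prime) (n : ℕ) :
    Function.Injective (fun x : kˣ => x ^ p ^ n) := by
  intro a b hab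
  ext
  exact pow_p_injective hp n (by simpa [Units.ext_iff] using hab)

end roots

section compl
variable [Field k] [IsAlgClosed k] [Monoid G] [AddCommGroup V] [Module k V]
  [FiniteDimensional k V]

theorem repInvariant_sup {ρ : Representation k G V} {A B : Submodule k V}
    (hA : RepInvariant ρ A) (hB : RepInvariant ρ B) : RepInvariant ρ (A ⊔ B) := by
  intro g v hv
  rw [Submodule.mem_sup] at hv ⊢
  obtain ⟨a, ha, b, hb, rfl⟩ := hv
  exact ⟨ρ g a, hA g a ha, ρ g b, hB g b hb, (map_add _ _ _).symm⟩

theorem compl_lemma {ι : Type*} [Fintype ι] (ρ : Representation k G V)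
    (Vf : ι → Submodule k V) (hinv : ∀ i, RepInvariant ρ (Vf i))
    (hsimp : ∀ i, IsSimpleRep (subRep ρ (Vf i) (hinv i)))
    (hsup : (⨆ i, Vf i) = ⊤)
    (N : Submodule k V) (hN : RepInvariant ρ N) (hNs : IsSimpleRep (subRep ρ N hN)) :
    ∃ C : Submodule k V, IsCompl N C ∧
      ∀ i, ¬ RepIso (subRep ρ (Vf i) (hinv i)) (subRep ρ N hN) → Vf i ≤ C := by
  classical
  set 𝒞 : Set (Submodule k V) := {C | RepInvariant ρ C ∧ C ⊓ N = ⊥} with h𝒞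
  have hbot𝒞 : (⊥ : Submodule k V) ∈ 𝒞 := ⟨fun g v hv => by simp_all, by simp⟩
  set ns : Set ℕ := (fun W : Submodule k V => Module.finrank k W) '' 𝒞 with hns
  have hnsne : ns.Nonempty := ⟨_, ⊥, hbot𝒞, rfl⟩
  have hnsbdd : BddAbove ns := by
    refine ⟨Module.finrank k V, ?_⟩
    rintro n ⟨W, _, rfl⟩
    exact Submodule.finrank_le W
  obtain ⟨C, hC𝒞, hCrank⟩ := Nat.sSup_mem hnsne hnsbdd
  have hCN : C ⊓ N = ⊥ := hC𝒞.2
  -- every Vf i is contained in N ⊔ C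
  have hcod : ∀ i, Vf i ≤ N ⊔ C := by
    intro i
    set Wi : Submodule k V := Vf i ⊓ (N ⊔ C) with hWi
    set Wi' : Submodule k ↥(Vf i) := Wi.comap (Vf i).subtype with hWi'
    have hWi'inv : RepInvariant (subRep ρ (Vf i) (hinv i)) Wi' := by
      intro g w hw
      simp only [hWi', Submodule.mem_comap, Submodule.coe_subtype] at hw ⊢
      rw [subRep_coe_apply]
      exact ⟨(hinv i) g _ hw.1, (repInvariant_sup hN hC𝒞.1) g _ hw.2⟩
    rcases (hsimp i).2 Wi' hWi'inv with hbot | htop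
    · exfalso
      -- then C ⊔ Vf i is a strictly bigger member of 𝒞
      have hWibot : Wi = ⊥ := by
        rw [Submodule.eq_bot_iff]
        intro v hv
        have hvi : v ∈ Vf i := hv.1
        have : (⟨v, hvi⟩ : ↥(Vf i)) ∈ Wi' := by simpa [hWi', Submodule.mem_comap] using hv
        rw [hbot] at this
        simpa [Subtype.ext_iff] using this
      have hC' : C ⊔ Vf i ∈ 𝒞 := by
        refine ⟨repInvariant_sup hC𝒞.1 (hinv i), ?_⟩
        rw [Submodule.eq_bot_iff]
        intro x hx
        obtain ⟨hx1, hx2⟩ := Submodule.mem_inf.mp hx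
        rw [Submodule.mem_sup] at hx1
        obtain ⟨c, hc, v, hv, rfl⟩ := hx1
        have hvW : v ∈ Wi := by
          refine ⟨hv, ?_⟩
          have hveq : v = (c + v) - c := by abel
          rw [hveq]
          exact Submodule.sub_mem _ (Submodule.mem_sup_left hx2) (Submodule.mem_sup_right hc)
        rw [hWibot] at hvW
        simp only [Submodule.mem_bot] at hvW
        subst hvW
        have hcm : c ∈ C ⊓ N := ⟨hc, by simpa using hx2⟩
        rw [hCN] at hcm
        simpa using hcm
      have hnle : ¬ Vf i ≤ C := by
        intro hle
        have hWieq : Wi = Vf i := by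
          rw [hWi, inf_eq_left]
          exact hle.trans le_sup_right
        have hVbot : Vf i = ⊥ := by rw [← hWieq, hWibot]
        haveI := (hsimp i).1
        obtain ⟨w, hwne⟩ := exists_ne (0 : ↥(Vf i))
        apply hwne
        apply Subtype.ext
        have hwb : (w : V) ∈ (⊥ : Submodule k V) := hVbot ▸ w.2
        simpa using hwb
      have hlt : C < C ⊔ Vf i := left_lt_sup.mpr hnle
      have hrank : Module.finrank k C < Module.finrank k ↥(C ⊔ Vf i) :=
        Submodule.finrank_lt_finrank_of_lt hlt
      have hmem : Module.finrank k ↥(C ⊔ Vf i) ∈ ns := ⟨C ⊔ Vf i, hC', rfl⟩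
      have : Module.finrank k ↥(C ⊔ Vf i) ≤ sSup ns := le_csSup hnsbdd hmem
      rw [← show Module.finrank k ↥C = sSup ns from hCrank] at this
      omega
    · intro v hv
      have : (⟨v, hv⟩ : ↥(Vf i)) ∈ Wi' := htop ▸ Submodule.mem_top
      simpa [hWi', Submodule.mem_comap] using (this.2)
  have hcompl : IsCompl N C := by
    constructor
    · rw [disjoint_iff]
      rw [inf_comm] at hCN
      exact hCN
    · rw [codisjoint_iff]
      rw [← top_le_iff, ← hsup]
      exact iSup_le hcod
  set π : V →ₗ[k] ↥N := N.linearProjOfIsCompl C hcompl with hπdef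
  have hπ : ∀ (g : G) (v : V), ((π (ρ g v)) : V) = ρ g ((π v : V)) := by
    intro g v
    obtain ⟨n, hn, c, hc, rfl⟩ := Submodule.mem_sup.mp
      (hcompl.codisjoint.eq_top ▸ Submodule.mem_top (x := v))
    rw [map_add, map_add, map_add]
    rw [show π n = ⟨n, hn⟩ from Submodule.linearProjOfIsCompl_apply_left hcompl ⟨n, hn⟩,
      show π c = 0 from Submodule.linearProjOfIsCompl_apply_right hcompl ⟨c, hc⟩,
      show π (ρ g n) = ⟨ρ g n, hN g n hn⟩ from
        Submodule.linearProjOfIsCompl_apply_left hcompl ⟨ρ g n, hN g n hn⟩,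
      show π (ρ g c) = 0 from
        Submodule.linearProjOfIsCompl_apply_right hcompl ⟨ρ g c, hC𝒞.1 g c hc⟩]
    simp
  refine ⟨C, hcompl, ?_⟩
  intro i hni
  set fi : ↥(Vf i) →ₗ[k] ↥N := π ∘ₗ (Vf i).subtype with hfi
  have hfieq : ∀ (g : G) (w : ↥(Vf i)),
      fi (subRep ρ (Vf i) (hinv i) g w) = subRep ρ N hN g (fi w) := by
    intro g w
    apply Subtype.ext
    simp only [hfi, LinearMap.comp_apply, Submodule.coe_subtype, subRep_coe_apply]
    exact hπ g w
  have hfi0 : fi = 0 := by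
    by_contra hne
    exact hni (schur_iso (hsimp i) hNs fi hfieq hne)
  intro v hv
  have : π v = 0 := by
    have := congrArg (fun f : ↥(Vf i) →ₗ[k] ↥N => f ⟨v, hv⟩) hfi0
    simpa [hfi] using this
  exact (Submodule.linearProjOfIsCompl_apply_eq_zero_iff hcompl).mp this

end compl

section twist
variable [CommSemiring k] {X : Type*} [Group X] (Y : Subgroup X) (hY : Y.Normal)
  [AddCommMonoid V] [Module k V] [AddCommMonoid V₁] [Module k V₁]
  [AddCommMonoid V₂] [Module k V₂]

@[simp] theorem conjHom_coe (x : X) (y : Y) :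
    ((conjHom Y hY x y : Y) : X) = x⁻¹ * (y : X) * x := rfl

theorem conjHom_conjHom (a b : X) (y : Y) :
    conjHom Y hY b (conjHom Y hY a y) = conjHom Y hY (a * b) y := by
  apply Subtype.ext
  simp [mul_assoc]

theorem conjHom_inv_cancel (a : X) (y : Y) :
    conjHom Y hY a (conjHom Y hY a⁻¹ y) = y := by
  apply Subtype.ext
  simp [mul_assoc]

/-- identity twist. -/
theorem repIso_conj_one (σ : Representation k Y V) :
    RepIso (σ.comp (conjHom Y hY 1)) σ := by
  refine ⟨LinearEquiv.refl k V, fun y v => ?_⟩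
  have : conjHom Y hY 1 y = y := by apply Subtype.ext; simp
  simp [MonoidHom.comp_apply, this]

/-- twist by an element of `Y` is isomorphic to the original. -/
theorem repIso_conj_mem {G : Type*} (σ : Representation k Y V) (y₀ : X) (hy₀ : y₀ ∈ Y) :
    RepIso (σ.comp (conjHom Y hY y₀)) σ := by
  refine ⟨LinearEquiv.ofLinear (σ ⟨y₀, hy₀⟩) (σ ⟨y₀⁻¹, inv_mem hy₀⟩) ?_ ?_, ?_⟩
  · rw [← Module.End.mul_eq_comp, ← map_mul]
    have : (⟨y₀, hy₀⟩ * ⟨y₀⁻¹, inv_mem hy₀⟩ : Y) = 1 := by apply Subtype.ext; simp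
    rw [this, map_one]
    rfl
  · rw [← Module.End.mul_eq_comp, ← map_mul]
    have : (⟨y₀⁻¹, inv_mem hy₀⟩ * ⟨y₀, hy₀⟩ : Y) = 1 := by apply Subtype.ext; simp
    rw [this, map_one]
    rfl
  · intro y v
    simp only [MonoidHom.comp_apply, LinearEquiv.ofLinear_apply]
    rw [rep_mul_apply, rep_mul_apply]
    have harg : (⟨y₀, hy₀⟩ * conjHom Y hY y₀ y : Y) = y * ⟨y₀, hy₀⟩ := by
      apply Subtype.ext
      simp [mul_assoc]
    rw [harg]

theorem repIso_conj_mul {σ : Representation k Y V} {a b : X}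
    (ha : RepIso (σ.comp (conjHom Y hY a)) σ) (hb : RepIso (σ.comp (conjHom Y hY b)) σ) :
    RepIso (σ.comp (conjHom Y hY (a * b))) σ := by
  obtain ⟨ea, hea⟩ := ha
  obtain ⟨eb, heb⟩ := hb
  refine ⟨eb.trans ea, fun y v => ?_⟩
  simp only [MonoidHom.comp_apply, LinearEquiv.trans_apply]
  rw [← conjHom_conjHom Y hY a b y]
  rw [show eb ((σ (conjHom Y hY b (conjHom Y hY a y))) v)
      = σ (conjHom Y hY a y) (eb v) from heb (conjHom Y hY a y) v]
  exact hea y (eb v)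

theorem repIso_conj_inv {σ : Representation k Y V} {a : X}
    (ha : RepIso (σ.comp (conjHom Y hY a)) σ) :
    RepIso (σ.comp (conjHom Y hY a⁻¹)) σ := by
  obtain ⟨e, he⟩ := ha
  refine ⟨e.symm, fun y v => ?_⟩
  have h2 := he (conjHom Y hY a⁻¹ y) (e.symm v)
  simp only [MonoidHom.comp_apply] at h2 ⊢
  rw [conjHom_inv_cancel Y hY a y, e.apply_symm_apply] at h2
  apply e.injective
  rw [e.apply_symm_apply]
  exact h2.symm

/-- from an iso of two twists, get a twist-iso against the untwisted rep. -/
theorem repIso_conj_of_conj_conj {σ₁ : Representation k Y V₁} {σ₂ : Representation k Y V₂}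
    {a b : X} (h : RepIso (σ₁.comp (conjHom Y hY a)) (σ₂.comp (conjHom Y hY b))) :
    RepIso (σ₁.comp (conjHom Y hY (b⁻¹ * a))) σ₂ := by
  obtain ⟨e, he⟩ := h
  refine ⟨e, fun y v => ?_⟩
  have := he (conjHom Y hY b⁻¹ y) v
  simp only [MonoidHom.comp_apply] at this ⊢
  rw [conjHom_conjHom Y hY b⁻¹ b y] at this
  rw [conjHom_conjHom Y hY b⁻¹ a y] at this
  have hbb : conjHom Y hY (b⁻¹ * b) y = y := by apply Subtype.ext; simp
  rw [hbb] at this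
  exact this

theorem isSimpleRep_conj {σ : Representation k Y V} (x : X) (h : IsSimpleRep σ) :
    IsSimpleRep (σ.comp (conjHom Y hY x)) := by
  refine ⟨h.1, fun W₂ hW₂ => ?_⟩
  apply h.2
  intro y v hv
  have := hW₂ (conjHom Y hY x⁻¹ y) v hv
  simp only [MonoidHom.comp_apply] at this
  rwa [conjHom_inv_cancel Y hY x y] at this

end twist

section translate
variable [Field k] {X : Type*} [Group X] (Y : Subgroup X)
  {M : Type*} [AddCommGroup M] [Module k M] (ρ : Representation k X M)

theorem rep_injective (x : X) : Function.Injective (ρ x) := by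
  intro a b h
  have := congrArg (ρ x⁻¹) h
  rwa [rep_mul_apply, rep_mul_apply, inv_mul_cancel, map_one] at this

theorem translate_invariant (hY : Y.Normal) {V' : Submodule k M}
    (hV' : RepInvariant (ρ.comp Y.subtype) V')
    (x : X) : RepInvariant (ρ.comp Y.subtype) (V'.map (ρ x)) := by
  rintro y v ⟨w, hw, rfl⟩
  refine ⟨ρ.comp Y.subtype (conjHom Y hY x y) w, hV' _ w hw, ?_⟩
  simp only [MonoidHom.comp_apply, Subgroup.coe_subtype]
  rw [rep_mul_apply, rep_mul_apply]
  have harg : x * ((conjHom Y hY x y : Y) : X) = (y : X) * x := by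
    rw [conjHom_coe]; group
  rw [harg]

theorem translate_repIso (hY : Y.Normal) {V' : Submodule k M}
    (hV' : RepInvariant (ρ.comp Y.subtype) V')
    (x : X) :
    RepIso ((subRep (ρ.comp Y.subtype) V' hV').comp (conjHom Y hY x))
      (subRep (ρ.comp Y.subtype) (V'.map (ρ x)) (translate_invariant Y ρ hY hV' x)) := by
  refine ⟨Submodule.equivMapOfInjective (ρ x) (rep_injective ρ x) V', fun y v => ?_⟩
  apply Subtype.ext
  simp only [MonoidHom.comp_apply, Submodule.coe_equivMapOfInjective_apply, subRep_coe_apply,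
    Subgroup.coe_subtype]
  rw [rep_mul_apply, rep_mul_apply]
  have harg : x * ((conjHom Y hY x y : Y) : X) = (y : X) * x := by
    rw [conjHom_coe]; group
  rw [harg]

end translate

section esub
variable [Field k] [IsAlgClosed k] {X : Type*} [Group X] (Y : Subgroup X) (hY : Y.Normal)
  {M : Type*} [AddCommGroup M] [Module k M] [FiniteDimensional k M]
  (ρ : Representation k X M)
  (W : Submodule k M) (hW : RepInvariant (ρ.comp Y.subtype) W)

/-- The space of `Y`-equivariant maps from `W` to `M`. -/
def Esub : Submodule k (↥W →ₗ[k] M) where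
  carrier := {ψ | ∀ (y : Y) (w : ↥W),
    ψ (subRep (ρ.comp Y.subtype) W hW y w) = ρ.comp Y.subtype y (ψ w)}
  add_mem' := by intro a b ha hb y w; simp [ha y w, hb y w]
  zero_mem' := by intro y w; simp
  smul_mem' := by intro c f hf y w; simp [hf y w]

theorem mem_Esub (ψ : ↥W →ₗ[k] M) : ψ ∈ Esub Y ρ W hW ↔
    ∀ (y : Y) (w : ↥W),
      ψ (subRep (ρ.comp Y.subtype) W hW y w) = ρ.comp Y.subtype y (ψ w) := Iff.rfl

theorem subtype_mem_Esub : W.subtype ∈ Esub Y ρ W hW := by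
  intro y w; rfl

/-- intertwining property of an equivalence against the `x`-twist. -/
def Intw (x : X) (e : ↥W ≃ₗ[k] ↥W) : Prop :=
  ∀ (y : Y) (w : ↥W), e (subRep (ρ.comp Y.subtype) W hW (conjHom Y hY x y) w)
    = subRep (ρ.comp Y.subtype) W hW y (e w)

theorem intw_symm_eq {x : X} {e : ↥W ≃ₗ[k] ↥W} (h : Intw Y hY ρ W hW x e) (y : Y) (w : ↥W) :
    e.symm (subRep (ρ.comp Y.subtype) W hW y w)
      = subRep (ρ.comp Y.subtype) W hW (conjHom Y hY x y) (e.symm w) := by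
  apply e.injective
  rw [e.apply_symm_apply, h y (e.symm w), e.apply_symm_apply]

/-- The twisted operator `ψ ↦ ρ(s) ∘ ψ ∘ e⁻¹` on `Hom(W, M)`. -/
def Top (s : X) (e : ↥W ≃ₗ[k] ↥W) : (↥W →ₗ[k] M) →ₗ[k] (↥W →ₗ[k] M) where
  toFun ψ := (ρ s) ∘ₗ ψ ∘ₗ (e.symm : ↥W →ₗ[k] ↥W)
  map_add' := by intro a b; ext w; simp
  map_smul' := by intro c a; ext w; simp

theorem Top_apply (s : X) (e : ↥W ≃ₗ[k] ↥W) (ψ : ↥W →ₗ[k] M) (w : ↥W) :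
    Top ρ W s e ψ w = ρ s (ψ (e.symm w)) := rfl

theorem Top_mem {s : X} {e : ↥W ≃ₗ[k] ↥W} (he : Intw Y hY ρ W hW s e)
    {ψ : ↥W →ₗ[k] M} (hψ : ψ ∈ Esub Y ρ W hW) : Top ρ W s e ψ ∈ Esub Y ρ W hW := by
  intro y w
  rw [Top_apply, Top_apply, intw_symm_eq Y hY ρ W hW he y w, hψ (conjHom Y hY s y) (e.symm w)]
  simp only [MonoidHom.comp_apply, Subgroup.coe_subtype]
  rw [rep_mul_apply, rep_mul_apply]
  have harg : s * ((conjHom Y hY s y : Y) : X) = (y : X) * s := by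
    rw [conjHom_coe]; group
  rw [harg]

theorem Top_comp (hsimpW : IsSimpleRep (subRep (ρ.comp Y.subtype) W hW))
    (s t : X) (es et est : ↥W ≃ₗ[k] ↥W)
    (hes : Intw Y hY ρ W hW s es) (het : Intw Y hY ρ W hW t et)
    (hest : Intw Y hY ρ W hW (s * t) est) :
    ∃ c : kˣ, ∀ ψ : ↥W →ₗ[k] M,
      Top ρ W s es (Top ρ W t et ψ) = (c : k) • Top ρ W (s * t) est ψ := by
  haveI : Nontrivial ↥W := hsimpW.1
  set σW := subRep (ρ.comp Y.subtype) W hW with hσW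
  -- the composite equivalence intertwines the twist by s*t
  have hE₂ : Intw Y hY ρ W hW (s * t) (et.trans es) := by
    intro y w
    simp only [LinearEquiv.trans_apply]
    rw [← conjHom_conjHom Y hY s t y, het (conjHom Y hY s y) w, hes y (et w)]
  -- Schur scalar for est.symm ∘ (et.trans es)
  have hg : ∀ (y : Y) (w : ↥W), (est.symm.trans (et.trans es) : ↥W ≃ₗ[k] ↥W)
      (σW y w) = σW y ((est.symm.trans (et.trans es)) w) := by
    intro y w
    simp only [LinearEquiv.trans_apply]
    rw [intw_symm_eq Y hY ρ W hW hest y w]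
    exact hE₂ y (est.symm w)
  obtain ⟨c, hc⟩ := schur_scalar hsimpW ((est.symm.trans (et.trans es) :
      ↥W ≃ₗ[k] ↥W) : ↥W →ₗ[k] ↥W) (by intro g v; exact hg g v)
  have hcne : c ≠ 0 := by
    intro h0
    obtain ⟨w, hw⟩ := exists_ne (0 : ↥W)
    apply hw
    have := hc w
    rw [h0, zero_smul] at this
    exact (est.symm.trans (et.trans es)).injective (by simpa using this)
  refine ⟨(Units.mk0 c hcne)⁻¹, fun ψ => ?_⟩
  ext w
  rw [Top_apply, Top_apply, LinearMap.smul_apply, Top_apply, rep_mul_apply]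
  have harg : et.symm (es.symm w) = c⁻¹ • est.symm w := by
    have h1 : (et.trans es) (est.symm w) = c • w := by simpa using hc w
    have h2 : est.symm w = (et.trans es).symm (c • w) := by
      rw [← h1, LinearEquiv.symm_apply_apply]
    rw [map_smul] at h2
    have h3 : (et.trans es).symm w = et.symm (es.symm w) := rfl
    rw [h3] at h2
    rw [h2, smul_smul, inv_mul_cancel₀ hcne, one_smul]
  rw [harg, map_smul, map_smul]
  simp [Units.val_inv_eq_inv_val]

theorem Top_Y (hsimpW : IsSimpleRep (subRep (ρ.comp Y.subtype) W hW))
    (y₀ : X) (hy₀ : y₀ ∈ Y) (ey : ↥W ≃ₗ[k] ↥W) (hey : Intw Y hY ρ W hW y₀ ey) :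
    ∃ c : kˣ, ∀ ψ ∈ Esub Y ρ W hW, Top ρ W y₀ ey ψ = (c : k) • ψ := by
  haveI : Nontrivial ↥W := hsimpW.1
  set σW := subRep (ρ.comp Y.subtype) W hW with hσW
  set A : ↥W →ₗ[k] ↥W := σW ⟨y₀, hy₀⟩ with hA
  have hAint : ∀ (y : Y) (w : ↥W), A (σW (conjHom Y hY y₀ y) w) = σW y (A w) := by
    intro y w
    rw [hA, rep_mul_apply, rep_mul_apply]
    have : (⟨y₀, hy₀⟩ * conjHom Y hY y₀ y : Y) = y * ⟨y₀, hy₀⟩ := by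
      apply Subtype.ext
      simp [mul_assoc]
    rw [this]
  have hg : ∀ (y : Y) (w : ↥W), (A ∘ₗ (ey.symm : ↥W →ₗ[k] ↥W)) (σW y w)
      = σW y ((A ∘ₗ (ey.symm : ↥W →ₗ[k] ↥W)) w) := by
    intro y w
    simp only [LinearMap.comp_apply, LinearEquiv.coe_coe]
    rw [hσW]
    rw [intw_symm_eq Y hY ρ W hW hey y w]
    exact hAint y (ey.symm w)
  obtain ⟨c, hc⟩ := schur_scalar hsimpW _ hg
  have hcne : c ≠ 0 := by
    intro h0
    obtain ⟨w, hw⟩ := exists_ne (0 : ↥W)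
    apply hw
    have h1 := hc (ey w)
    rw [h0, zero_smul] at h1
    simp only [LinearMap.comp_apply, LinearEquiv.coe_coe, ey.symm_apply_apply] at h1
    -- A w = 0; but A is invertible
    have h2 : σW ⟨y₀, hy₀⟩⁻¹ (A w) = w := by
      rw [hA, rep_mul_apply]
      simp
    rw [h1, map_zero] at h2
    exact h2.symm
  refine ⟨Units.mk0 c hcne, fun ψ hψ => ?_⟩
  ext w
  rw [Top_apply]
  have h4 : ρ y₀ (ψ (ey.symm w)) = ψ (σW ⟨y₀, hy₀⟩ (ey.symm w)) := by
    rw [hψ ⟨y₀, hy₀⟩ (ey.symm w)]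
    rfl
  rw [h4]
  have h5 : σW ⟨y₀, hy₀⟩ (ey.symm w) = c • w := by
    have := hc w
    simpa [hA] using this
  rw [h5, map_smul]
  rfl

end esub

section core
variable {p : ℕ} {X M : Type*}

theorem core (hp : p.Prime) [Field k] [IsAlgClosed k] [CharP k p]
    [Group X] [Finite X] (Y : Subgroup X) (hY : Y.Normal)
    (hXY : IsPGroup p (X ⧸ Y))
    [AddCommGroup M] [Module k M] [FiniteDimensional k M]
    (ρ : Representation k X M) (hρ : IsSimpleRep ρ) :
    ∃ (V' : Submodule k M) (hV' : RepInvariant (ρ.comp Y.subtype) V'),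
      IsSimpleRep (subRep (ρ.comp Y.subtype) V' hV') ∧
      ∀ s : X, RepIso ((subRep (ρ.comp Y.subtype) V' hV').comp (conjHom Y hY s))
          (subRep (ρ.comp Y.subtype) V' hV') → V'.map (ρ s) ≤ V' := by
  classical
  haveI : Fact p.Prime := ⟨hp⟩
  haveI : Nontrivial M := hρ.1
  obtain ⟨W, hW, hWs⟩ := exists_simple_subRep (ρ.comp Y.subtype)
  haveI : Nontrivial ↥W := hWs.1
  -- the stabilizer subgroup of (the iso class of) W
  let S₀ : Subgroup X :=
    { carrier := {x | RepIso ((subRep (ρ.comp Y.subtype) W hW).comp (conjHom Y hY x))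
        (subRep (ρ.comp Y.subtype) W hW)}
      one_mem' := repIso_conj_one Y hY _
      mul_mem' := fun ha hb => repIso_conj_mul Y hY ha hb
      inv_mem' := fun ha => repIso_conj_inv Y hY ha }
  have hmemS₀ : ∀ x : X, x ∈ S₀ ↔
      RepIso ((subRep (ρ.comp Y.subtype) W hW).comp (conjHom Y hY x))
        (subRep (ρ.comp Y.subtype) W hW) := fun x => Iff.rfl
  -- choose intertwiners
  have hpredfun : ∀ s : S₀, ∃ e : ↥W ≃ₗ[k] ↥W, Intw Y hY ρ W hW (↑s) e := by
    intro s
    obtain ⟨e, he⟩ := (hmemS₀ ↑s).mp s.2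
    exact ⟨e, fun y w => he y w⟩
  choose φ hIntw using hpredfun
  -- the twisted operators restricted to Esub
  have hTmem : ∀ (s : S₀), ∀ ψ ∈ Esub Y ρ W hW, Top ρ W (↑s) (φ s) ψ ∈ Esub Y ρ W hW :=
    fun s ψ hψ => Top_mem Y hY ρ W hW (hIntw s) hψ
  let TE : S₀ → (↥(Esub Y ρ W hW) →ₗ[k] ↥(Esub Y ρ W hW)) :=
    fun s => (Top ρ W (↑s) (φ s)).restrict (hTmem s)
  have hTEcoe : ∀ (s : S₀) (ψ : ↥(Esub Y ρ W hW)),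
      ((TE s ψ : ↥(Esub Y ρ W hW)) : ↥W →ₗ[k] M) = Top ρ W (↑s) (φ s) ↑ψ := fun s ψ => rfl
  have hTEmul : ∀ s t : S₀, ∃ c : kˣ, ∀ ψ : ↥(Esub Y ρ W hW),
      TE s (TE t ψ) = (c : k) • TE (s * t) ψ := by
    intro s t
    obtain ⟨c, hc⟩ := Top_comp Y hY ρ W hW hWs (↑s) (↑t) (φ s) (φ t) (φ (s * t))
      (hIntw s) (hIntw t) (hIntw (s * t))
    refine ⟨c, fun ψ => ?_⟩
    apply Subtype.ext
    rw [hTEcoe, hTEcoe]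
    rw [show (((c : k) • TE (s * t) ψ : ↥(Esub Y ρ W hW)) : ↥W →ₗ[k] M)
      = (c : k) • (TE (s * t) ψ : ↥W →ₗ[k] M) from rfl, hTEcoe]
    exact hc ↑ψ
  have hTEY : ∀ (s : S₀), (↑s : X) ∈ Y → ∃ c : kˣ, ∀ ψ : ↥(Esub Y ρ W hW),
      TE s ψ = (c : k) • ψ := by
    intro s hs
    obtain ⟨c, hc⟩ := Top_Y Y hY ρ W hW hWs (↑s) hs (φ s) (hIntw s)
    refine ⟨c, fun ψ => ?_⟩
    apply Subtype.ext
    rw [hTEcoe]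
    exact hc ↑ψ ψ.2
  have hTEinj : ∀ s : S₀, Function.Injective (TE s) := by
    intro s a b hab
    obtain ⟨c, hc⟩ := hTEmul s⁻¹ s
    obtain ⟨c₁, hc₁⟩ := hTEY 1 (by rw [OneMemClass.coe_one]; exact one_mem Y)
    have ha := hc a
    have hb := hc b
    rw [inv_mul_cancel, hc₁ a] at ha
    rw [inv_mul_cancel, hc₁ b] at hb
    have : (c : k) • (c₁ : k) • a = (c : k) • (c₁ : k) • b := by
      rw [← ha, ← hb, hab]
    have h2 : (c₁ : k) • a = (c₁ : k) • b := smul_right_injective _ (Units.ne_zero c) this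
    exact smul_right_injective _ (Units.ne_zero c₁) h2
  haveI : Nontrivial ↥(Esub Y ρ W hW) := by
    refine ⟨⟨⟨W.subtype, subtype_mem_Esub Y ρ W hW⟩, 0, ?_⟩⟩
    intro h
    obtain ⟨w, hw⟩ := exists_ne (0 : ↥W)
    apply hw
    have h2 := congrArg (fun ξ : ↥(Esub Y ρ W hW) => (↑ξ : ↥W →ₗ[k] M) w) h
    simp only [Submodule.coe_subtype] at h2
    exact Subtype.ext (by simpa using h2)
  -- the p-group quotient
  haveI : Y.Normal := hY
  haveI hYn : (Y.subgroupOf S₀).Normal := Subgroup.normal_subgroupOf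
  have hP : IsPGroup p (S₀ ⧸ Y.subgroupOf S₀) := by
    intro g
    obtain ⟨a, rfl⟩ := QuotientGroup.mk_surjective g
    obtain ⟨n, hn⟩ := hXY (QuotientGroup.mk ((a : X) : X))
    refine ⟨n, ?_⟩
    have hmem : a ^ p ^ n ∈ Y.subgroupOf S₀ := by
      rw [Subgroup.mem_subgroupOf]
      have h2 : ((a : X) ^ p ^ n) ∈ Y := by
        rw [← QuotientGroup.eq_one_iff]
        rw [show (QuotientGroup.mk ((a:X) ^ p ^ n) : X ⧸ Y)
          = (QuotientGroup.mk ((a:X)) : X ⧸ Y) ^ p ^ n from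
          (map_pow (QuotientGroup.mk' Y) (a : X) (p ^ n))]
        exact hn
      simpa using h2
    rw [show ((QuotientGroup.mk a : S₀ ⧸ Y.subgroupOf S₀)) ^ p ^ n
      = QuotientGroup.mk (a ^ p ^ n) from
      (map_pow (QuotientGroup.mk' (Y.subgroupOf S₀)) a (p ^ n)).symm]
    rw [QuotientGroup.eq_one_iff]
    exact hmem
  set τ : (S₀ ⧸ Y.subgroupOf S₀) → S₀ := Quotient.out with hτdef
  have hout : ∀ c : S₀ ⧸ Y.subgroupOf S₀, (QuotientGroup.mk (τ c) : S₀ ⧸ Y.subgroupOf S₀) = c :=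
    fun c => Quotient.out_eq c
  have hrel1 : ∀ s t : S₀, (s⁻¹ * t) ∈ Y.subgroupOf S₀ →
      ∃ c : kˣ, ∀ ψ, TE t ψ = (c : k) • TE s ψ := by
    intro s t hst
    obtain ⟨c, hc⟩ := hTEmul s (s⁻¹ * t)
    obtain ⟨c₃, hc₃⟩ := hTEY (s⁻¹ * t) (Subgroup.mem_subgroupOf.mp hst)
    refine ⟨c⁻¹ * c₃, fun ψ => ?_⟩
    have h1 := hc ψ
    rw [hc₃ ψ, map_smul] at h1
    have h2 : s * (s⁻¹ * t) = t := by group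
    rw [h2] at h1
    rw [Units.val_mul, mul_smul, h1, smul_smul, Units.val_inv_eq_inv_val,
      inv_mul_cancel₀ (Units.ne_zero c), one_smul]
  have hmkmul : ∀ a b : S₀, (QuotientGroup.mk (a * b) : S₀ ⧸ Y.subgroupOf S₀)
      = QuotientGroup.mk a * QuotientGroup.mk b :=
    fun a b => map_mul (QuotientGroup.mk' (Y.subgroupOf S₀)) a b
  have hγex : ∀ c d : S₀ ⧸ Y.subgroupOf S₀, ∃ u : kˣ, ∀ ψ,
      TE (τ c) (TE (τ d) ψ) = (u : k) • TE (τ (c * d)) ψ := by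
    intro c d
    obtain ⟨u₁, hu₁⟩ := hTEmul (τ c) (τ d)
    have hmemb : (τ (c * d))⁻¹ * (τ c * τ d) ∈ Y.subgroupOf S₀ := by
      rw [← QuotientGroup.eq]
      rw [hout (c * d), hmkmul, hout, hout]
    obtain ⟨u₂, hu₂⟩ := hrel1 (τ (c * d)) (τ c * τ d) hmemb
    refine ⟨u₁ * u₂, fun ψ => ?_⟩
    rw [hu₁ ψ, hu₂ ψ, smul_smul, Units.val_mul]
  choose γ hγ using hγex
  have hTEne : ∀ s : S₀, ∃ ψ : ↥(Esub Y ρ W hW), TE s ψ ≠ 0 := by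
    intro s
    obtain ⟨ψ, hψ⟩ := exists_ne (0 : ↥(Esub Y ρ W hW))
    exact ⟨ψ, fun h => hψ (hTEinj s (by rw [h, map_zero]))⟩
  have hcancel : ∀ (x : S₀ ⧸ Y.subgroupOf S₀) (a b : kˣ),
      (∀ ψ, (a : k) • TE (τ x) ψ = (b : k) • TE (τ x) ψ) → a = b := by
    intro x a b hab
    obtain ⟨ψ, hψ⟩ := hTEne (τ x)
    have h1 := hab ψ
    exact Units.ext (smul_left_injective k hψ h1)
  have hco : ∀ c d e : S₀ ⧸ Y.subgroupOf S₀,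
      γ d e * γ c (d * e) = γ c d * γ (c * d) e := by
    intro c d e
    have hassoc : c * d * e = c * (d * e) := mul_assoc c d e
    apply hcancel (c * d * e)
    intro ψ
    rw [Units.val_mul, Units.val_mul, mul_smul, mul_smul]
    rw [← hγ (c * d) e ψ, ← hγ c d (TE (τ e) ψ)]
    rw [hassoc, ← hγ c (d * e) ψ, ← map_smul, ← hγ d e ψ]
  haveI : Fintype (S₀ ⧸ Y.subgroupOf S₀) := Fintype.ofFinite _
  obtain ⟨n, hn⟩ := (IsPGroup.iff_card).mp hP
  set bfun : (S₀ ⧸ Y.subgroupOf S₀) → kˣ := fun c => ∏ t, γ c t with hbfundef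
  have hb : ∀ c d, bfun d * bfun c = γ c d ^ p ^ n * bfun (c * d) := by
    intro c d
    have h1 : ∏ e, (γ d e * γ c (d * e)) = ∏ e, (γ c d * γ (c * d) e) :=
      Finset.prod_congr rfl (fun e _ => hco c d e)
    rw [Finset.prod_mul_distrib, Finset.prod_mul_distrib, Finset.prod_const] at h1
    have h2 : ∏ e, γ c (d * e) = bfun c :=
      Fintype.prod_equiv (Equiv.mulLeft d) _ _ (fun e => rfl)
    rw [h2] at h1
    rw [Finset.card_univ, ← Nat.card_eq_fintype_card, hn] at h1
    exact h1
  choose r hr using fun u : kˣ => exists_unique_root (k := k) hp n u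
  set β : (S₀ ⧸ Y.subgroupOf S₀) → kˣ := fun c => r (bfun c) with hβdef
  have hβ : ∀ c d, β c * β d = γ c d * β (c * d) := by
    intro c d
    apply units_pow_p_injective hp n
    show (β c * β d) ^ p ^ n = (γ c d * β (c * d)) ^ p ^ n
    rw [mul_pow, mul_pow]
    simp only [hβdef]
    rw [hr, hr, hr, mul_comm (bfun c) (bfun d), hb c d]
  set Uhat : (S₀ ⧸ Y.subgroupOf S₀) → (↥(Esub Y ρ W hW) →ₗ[k] ↥(Esub Y ρ W hW)) :=
    fun c => ((((β c)⁻¹ : kˣ) : k) • TE (τ c)) with hUhatdef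
  have hUhatapp : ∀ c ψ, Uhat c ψ = (((β c)⁻¹ : kˣ) : k) • TE (τ c) ψ := fun c ψ => rfl
  have hUhatm : ∀ c d (ψ : ↥(Esub Y ρ W hW)), Uhat c (Uhat d ψ) = Uhat (c * d) ψ := by
    intro c d ψ
    rw [hUhatapp, hUhatapp, hUhatapp, map_smul, hγ c d ψ, smul_smul, smul_smul]
    congr 1
    have hk : ((β c : kˣ) : k) * ((β d : kˣ) : k)
        = ((γ c d : kˣ) : k) * ((β (c * d) : kˣ) : k) := by
      exact_mod_cast congrArg Units.val (hβ c d)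
    have hA : ((β c : kˣ) : k) ≠ 0 := Units.ne_zero _
    have hB : ((β d : kˣ) : k) ≠ 0 := Units.ne_zero _
    have hC : ((β (c * d) : kˣ) : k) ≠ 0 := Units.ne_zero _
    rw [Units.val_inv_eq_inv_val, Units.val_inv_eq_inv_val, Units.val_inv_eq_inv_val]
    field_simp
    first
    | linear_combination hk
    | linear_combination (-1 : k) * hk
    | linear_combination ((γ c d : kˣ) : k) * hk
    | linear_combination (-((γ c d : kˣ) : k)) * hk
  have hUhat1 : ∀ ψ, Uhat 1 ψ = ψ := by
    have hinj : Function.Injective (Uhat 1) := by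
      intro a b hab
      rw [hUhatapp, hUhatapp] at hab
      exact hTEinj (τ 1) (smul_right_injective _ (Units.ne_zero _) hab)
    intro ψ
    apply hinj
    have h1 := hUhatm 1 1 ψ
    rwa [one_mul] at h1
  obtain ⟨Ψ₀, hΨ₀ne, hΨ₀fix⟩ := exists_fixed_vector hp k hP Uhat hUhat1 hUhatm
  have hTEΨ : ∀ s : S₀, ∃ c : kˣ, TE s Ψ₀ = (c : k) • Ψ₀ := by
    intro s
    have hmemb : (τ (QuotientGroup.mk s))⁻¹ * s ∈ Y.subgroupOf S₀ := by
      rw [← QuotientGroup.eq]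
      rw [hout]
    obtain ⟨u, hu⟩ := hrel1 (τ (QuotientGroup.mk s)) s hmemb
    refine ⟨u * β (QuotientGroup.mk s), ?_⟩
    have h2 : TE (τ (QuotientGroup.mk s)) Ψ₀ = ((β (QuotientGroup.mk s) : kˣ) : k) • Ψ₀ := by
      have h3 := hΨ₀fix (QuotientGroup.mk s)
      rw [hUhatapp] at h3
      conv_rhs => rw [← h3]
      rw [smul_smul]
      rw [show ((β (QuotientGroup.mk s) : kˣ) : k) * (((β (QuotientGroup.mk s))⁻¹ : kˣ) : k)
        = 1 by rw [← Units.val_mul, mul_inv_cancel, Units.val_one]]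
      rw [one_smul]
    rw [hu Ψ₀, h2, smul_smul, Units.val_mul]
  -- the invariant simple submodule
  set ψ₀ : ↥W →ₗ[k] M := (Ψ₀ : ↥W →ₗ[k] M) with hψ₀def
  have hψ₀E : ψ₀ ∈ Esub Y ρ W hW := Ψ₀.2
  have hψ₀ne : ψ₀ ≠ 0 := fun h => hΨ₀ne (Subtype.ext h)
  have hψ₀equiv : ∀ (y : Y) (w : ↥W), ψ₀ (subRep (ρ.comp Y.subtype) W hW y w)
      = (ρ.comp Y.subtype) y (ψ₀ w) := hψ₀E
  have hψ₀inj : Function.Injective ψ₀ := by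
    have hkerinv : RepInvariant (subRep (ρ.comp Y.subtype) W hW) (LinearMap.ker ψ₀) := by
      intro y w hw
      simp only [LinearMap.mem_ker] at hw ⊢
      rw [hψ₀equiv y w, hw, map_zero]
    rcases hWs.2 _ hkerinv with h | h
    · rw [← LinearMap.ker_eq_bot]; exact h
    · exfalso
      apply hψ₀ne
      ext w
      have : w ∈ LinearMap.ker ψ₀ := h ▸ Submodule.mem_top
      simpa using this
  have hV'inv : RepInvariant (ρ.comp Y.subtype) (LinearMap.range ψ₀) := by
    rintro y v ⟨w, rfl⟩
    exact ⟨subRep (ρ.comp Y.subtype) W hW y w, hψ₀equiv y w⟩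
  have hWV'iso : RepIso (subRep (ρ.comp Y.subtype) W hW)
      (subRep (ρ.comp Y.subtype) (LinearMap.range ψ₀) hV'inv) := by
    refine ⟨LinearEquiv.ofInjective ψ₀ hψ₀inj, fun y w => ?_⟩
    apply Subtype.ext
    rw [subRep_coe_apply]
    rw [show ((LinearEquiv.ofInjective ψ₀ hψ₀inj (subRep (ρ.comp Y.subtype) W hW y w)
      : ↥(LinearMap.range ψ₀)) : M) = ψ₀ (subRep (ρ.comp Y.subtype) W hW y w) from rfl]
    rw [show ((LinearEquiv.ofInjective ψ₀ hψ₀inj w : ↥(LinearMap.range ψ₀)) : M)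
      = ψ₀ w from rfl]
    exact hψ₀equiv y w
  refine ⟨LinearMap.range ψ₀, hV'inv, repIso_simple hWV'iso hWs, ?_⟩
  intro s hs
  have hsW : s ∈ S₀ := by
    rw [hmemS₀]
    exact repIso_trans (repIso_trans (repIso_comp_congr (conjHom Y hY s) hWV'iso) hs)
      (repIso_symm hWV'iso)
  obtain ⟨c, hc⟩ := hTEΨ ⟨s, hsW⟩
  have hc' : ∀ w : ↥W, ρ s (ψ₀ ((φ ⟨s, hsW⟩).symm w)) = (c : k) • ψ₀ w := by
    intro w
    have h2 := congrArg (fun ξ : ↥(Esub Y ρ W hW) => (↑ξ : ↥W →ₗ[k] M) w) hc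
    rw [hTEcoe] at h2
    rw [show ((((c : k) • Ψ₀ : ↥(Esub Y ρ W hW))) : ↥W →ₗ[k] M) = (c : k) • ψ₀ from rfl] at h2
    exact h2
  rintro v ⟨u, hu, rfl⟩
  obtain ⟨w, rfl⟩ := hu
  rw [show ψ₀ w = ψ₀ ((φ ⟨s, hsW⟩).symm (φ ⟨s, hsW⟩ w)) by rw [LinearEquiv.symm_apply_apply]]
  rw [hc' (φ ⟨s, hsW⟩ w)]
  exact Submodule.smul_mem _ _ ⟨_, rfl⟩

end core

end Aux


open Aux in
/-- Every simple `kX`-module is induced from an extension to the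
stabilizer of a simple `kY`-submodule of its restriction to `Y`. -/
theorem simple_module_is_induced
    {p : ℕ} (hp : p.Prime) (k : Type*) [Field k] [IsAlgClosed k] [CharP k p]
    (X : Type*) [Group X] [Finite X] (Y : Subgroup X) (hY : Y.Normal)
    (hXY : IsPGroup p (X ⧸ Y))
    (M : Type*) [AddCommGroup M] [Module k M] [FiniteDimensional k M]
    (ρ : Representation k X M) (hρ : IsSimpleRep ρ) :
    ∃ (W : Submodule k M) (hW : RepInvariant (ρ.comp Y.subtype) W),
      IsSimpleRep (subRep (ρ.comp Y.subtype) W hW) ∧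
      ∀ S : Subgroup X,
        (∀ x : X, x ∈ S ↔
            RepIso ((subRep (ρ.comp Y.subtype) W hW).comp (conjHom Y hY x))
              (subRep (ρ.comp Y.subtype) W hW)) →
        ∃ ρext : Representation k S W,
          (∀ (y : S) (hy : (y : X) ∈ Y),
              ρext y = subRep (ρ.comp Y.subtype) W hW ⟨y, hy⟩) ∧
          RepIso ρ (inducedRep k S ρext) := by
  classical
  obtain ⟨V', hV', hsimp', hstab⟩ := core hp Y hY hXY ρ hρ
  haveI : Nontrivial ↥V' := hsimp'.1
  refine ⟨V', hV', hsimp', ?_⟩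
  intro S hS
  -- V' is stable under every element of S (and inverses)
  have hstabS : ∀ s : X, s ∈ S → ∀ v ∈ V', ρ s v ∈ V' := by
    intro s hs v hv
    exact hstab s ((hS s).mp hs) ⟨v, hv, rfl⟩
  have hstabS' : ∀ s : X, s ∈ S → (V'.map (ρ s) ≤ V') := by
    intro s hs
    rintro v ⟨u, hu, rfl⟩
    exact hstabS s hs u hu
  -- the extension of the representation to S
  let ρext : Representation k S ↥V' :=
    { toFun := fun s => (ρ (s : X)).restrict (fun v hv => hstabS (s : X) s.2 v hv)
      map_one' := by
        ext v
        show ρ ((1 : S) : X) (v : M) = (v : M)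
        rw [show ((1 : S) : X) = 1 from rfl, map_one]
        rfl
      map_mul' := by
        intro s t
        ext v
        show ρ ((s * t : S) : X) (v : M) = ρ (s : X) (ρ (t : X) (v : M))
        rw [rep_mul_apply]
        rfl }
  have hρext_coe : ∀ (s : S) (v : ↥V'), ((ρext s v : ↥V') : M) = ρ (s : X) (v : M) :=
    fun s v => rfl
  have hext : ∀ (y : S) (hy : (y : X) ∈ Y),
      ρext y = subRep (ρ.comp Y.subtype) V' hV' ⟨(y : X), hy⟩ := by
    intro y hy
    ext v
    show ρ ((y : S) : X) (v : M) = ρ (Y.subtype ⟨(y : X), hy⟩) (v : M)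
    rfl
  refine ⟨ρext, hext, ?_⟩
  -- the transversal of right cosets
  set Q := Quotient (QuotientGroup.rightRel S) with hQdef
  haveI : Fintype Q := Fintype.ofFinite _
  set τ : Q → X := Quotient.out with hτdef
  -- the translated submodules
  set Vc : Q → Submodule k M := fun c => V'.map (ρ (τ c)⁻¹) with hVcdef
  have hVcinv : ∀ c, RepInvariant (ρ.comp Y.subtype) (Vc c) :=
    fun c => translate_invariant Y ρ hY hV' (τ c)⁻¹
  have hVciso : ∀ c, RepIso ((subRep (ρ.comp Y.subtype) V' hV').comp (conjHom Y hY (τ c)⁻¹))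
      (subRep (ρ.comp Y.subtype) (Vc c) (hVcinv c)) :=
    fun c => translate_repIso Y ρ hY hV' (τ c)⁻¹
  have hVcsimp : ∀ c, IsSimpleRep (subRep (ρ.comp Y.subtype) (Vc c) (hVcinv c)) :=
    fun c => repIso_simple (hVciso c) (isSimpleRep_conj Y hY _ hsimp')
  have hpair : ∀ c d : Q, c ≠ d →
      ¬ RepIso (subRep (ρ.comp Y.subtype) (Vc c) (hVcinv c))
        (subRep (ρ.comp Y.subtype) (Vc d) (hVcinv d)) := by
    intro c d hne hiso
    apply hne
    have h3 : RepIso ((subRep (ρ.comp Y.subtype) V' hV').comp (conjHom Y hY (τ c)⁻¹))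
        ((subRep (ρ.comp Y.subtype) V' hV').comp (conjHom Y hY (τ d)⁻¹)) :=
      repIso_trans (repIso_trans (hVciso c) hiso) (repIso_symm (hVciso d))
    have h4 := repIso_conj_of_conj_conj Y hY h3
    rw [inv_inv] at h4
    have h5 : τ d * (τ c)⁻¹ ∈ S := (hS _).mpr h4
    have h6 : (Quotient.mk (QuotientGroup.rightRel S) (τ c) : Q)
        = Quotient.mk (QuotientGroup.rightRel S) (τ d) :=
      Quotient.sound ((QuotientGroup.rightRel_apply).mpr h5)
    rw [hτdef] at h6
    rwa [Quotient.out_eq, Quotient.out_eq] at h6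
  -- the sum of all the translates is everything
  have hVcsup : (⨆ c, Vc c) = ⊤ := by
    have hMsuminv : RepInvariant ρ (⨆ x : X, V'.map (ρ x)) := by
      intro g v hv
      have h1 : ρ g v ∈ Submodule.map (ρ g) (⨆ x : X, V'.map (ρ x)) :=
        Submodule.mem_map_of_mem hv
      rw [Submodule.map_iSup] at h1
      have hle : (⨆ x, Submodule.map (ρ g) (Submodule.map (ρ x) V'))
          ≤ ⨆ y : X, V'.map (ρ y) := by
        apply iSup_le
        intro x
        rw [← Submodule.map_comp, ← Module.End.mul_eq_comp, ← map_mul]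
        exact le_iSup (fun y : X => V'.map (ρ y)) (g * x)
      exact hle h1
    have htop : (⨆ x : X, V'.map (ρ x)) = ⊤ := by
      rcases hρ.2 _ hMsuminv with h | h
      · exfalso
        have hVle : V' ≤ ⨆ x : X, V'.map (ρ x) := by
          have h2 : V'.map (ρ 1) = V' := by rw [map_one]; exact Submodule.map_id V'
          exact le_trans (le_of_eq h2.symm) (le_iSup (fun x : X => V'.map (ρ x)) 1)
        rw [h] at hVle
        obtain ⟨v, hv⟩ := exists_ne (0 : ↥V')
        apply hv
        apply Subtype.ext
        simpa using hVle v.2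
      · exact h
    rw [← top_le_iff, ← htop]
    apply iSup_le
    intro x
    set c : Q := Quotient.mk (QuotientGroup.rightRel S) x⁻¹ with hcdef
    have hsmem : x⁻¹ * (τ c)⁻¹ ∈ S := by
      have h6 : (Quotient.mk (QuotientGroup.rightRel S) (τ c) : Q)
          = Quotient.mk (QuotientGroup.rightRel S) x⁻¹ := by
        rw [hτdef, hcdef]
        exact Quotient.out_eq _
      exact (QuotientGroup.rightRel_apply).mp (Quotient.exact h6)
    have hxeq : (τ c)⁻¹ * (x⁻¹ * (τ c)⁻¹)⁻¹ = x := by group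
    have hstep : V'.map (ρ x) ≤ Vc c := by
      have hVceq : Vc c = Submodule.map (ρ (τ c)⁻¹) V' := rfl
      rw [hVceq, ← hxeq, map_mul, Module.End.mul_eq_comp, Submodule.map_comp]
      exact Submodule.map_mono (hstabS' _ (inv_mem hsmem))
    exact hstep.trans (le_iSup Vc c)
  -- the induced map
  set Ψlin : ↥(inducedCarrier k S ρext) →ₗ[k] M :=
    { toFun := fun f => ∑ c : Q, ρ (τ c)⁻¹ (((f : X → ↥V') (τ c) : M))
      map_add' := by
        intro f g
        rw [← Finset.sum_add_distrib]
        apply Finset.sum_congr rfl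
        intro c _
        rw [show ((f + g : ↥(inducedCarrier k S ρext)) : X → ↥V') (τ c)
          = (f : X → ↥V') (τ c) + (g : X → ↥V') (τ c) from rfl]
        rw [Submodule.coe_add, map_add]
      map_smul' := by
        intro a f
        rw [RingHom.id_apply, Finset.smul_sum]
        apply Finset.sum_congr rfl
        intro c _
        rw [show ((a • f : ↥(inducedCarrier k S ρext)) : X → ↥V') (τ c)
          = a • (f : X → ↥V') (τ c) from rfl]
        rw [Submodule.coe_smul, map_smul] } with hΨdef
  have hΨapp : ∀ f : ↥(inducedCarrier k S ρext),
      Ψlin f = ∑ c : Q, ρ (τ c)⁻¹ (((f : X → ↥V') (τ c) : M)) := fun f => rfl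
  -- right multiplication on the coset space
  have hrelmul : ∀ (g a b : X), (QuotientGroup.rightRel S) a b →
      (QuotientGroup.rightRel S) (a * g) (b * g) := by
    intro g a b h
    rw [QuotientGroup.rightRel_apply] at h ⊢
    have hh : b * g * (a * g)⁻¹ = b * a⁻¹ := by group
    rw [hh]
    exact h
  let eg : X → Q ≃ Q := fun g =>
    { toFun := Quotient.map (· * g) (fun a b h => hrelmul g a b h)
      invFun := Quotient.map (· * g⁻¹) (fun a b h => hrelmul g⁻¹ a b h)
      left_inv := by
        intro q
        induction q using Quotient.inductionOn with
        | h a => simp [Quotient.map_mk, mul_assoc]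
      right_inv := by
        intro q
        induction q using Quotient.inductionOn with
        | h a => simp [Quotient.map_mk, mul_assoc] }
  have heg : ∀ (g : X) (c : Q), eg g c = Quotient.mk (QuotientGroup.rightRel S) (τ c * g) := by
    intro g c
    have h1 : c = Quotient.mk (QuotientGroup.rightRel S) (τ c) := (Quotient.out_eq c).symm
    conv_lhs => rw [h1]
    rfl
  -- the coercion of the induced action
  have hindcoe : ∀ (g : X) (f : ↥(inducedCarrier k S ρext)) (y : X),
      (((inducedRep k S ρext) g f : ↥(inducedCarrier k S ρext)) : X → ↥V') y
        = (f : X → ↥V') (y * g) := fun g f y => rfl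
  -- equivariance
  have hΨequiv : ∀ (g : X) (f : ↥(inducedCarrier k S ρext)),
      Ψlin ((inducedRep k S ρext) g f) = ρ g (Ψlin f) := by
    intro g f
    rw [hΨapp, hΨapp, map_sum]
    refine Fintype.sum_equiv (eg g) _ _ ?_
    intro c
    rw [hindcoe g f (τ c)]
    set c' : Q := eg g c with hc'def
    have h6 : (Quotient.mk (QuotientGroup.rightRel S) (τ c') : Q)
        = Quotient.mk (QuotientGroup.rightRel S) (τ c * g) := by
      rw [hτdef]
      rw [Quotient.out_eq]
      rw [hc'def, heg g c]
    have hs : (τ c * g) * (τ c')⁻¹ ∈ S :=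
      (QuotientGroup.rightRel_apply).mp (Quotient.exact h6)
    have heq2 : ((τ c * g) * (τ c')⁻¹) * τ c' = τ c * g := by group
    have hval : ((f : X → ↥V') (τ c * g) : M)
        = ρ ((τ c * g) * (τ c')⁻¹) (((f : X → ↥V') (τ c') : M)) := by
      rw [← heq2]
      rw [f.2 ⟨(τ c * g) * (τ c')⁻¹, hs⟩ (τ c')]
      rw [hρext_coe]
      rw [heq2]
    rw [hval, rep_mul_apply]
    have harg : (τ c)⁻¹ * ((τ c * g) * (τ c')⁻¹) = g * (τ c')⁻¹ := by group
    rw [harg, ← rep_mul_apply]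
  -- injectivity
  have hindep : ∀ (m : Q → M), (∀ c, m c ∈ Vc c) → (∑ c, m c = 0) → ∀ c₀, m c₀ = 0 := by
    intro m hm hsum c₀
    obtain ⟨C, hC, hCle⟩ := compl_lemma (ρ.comp Y.subtype) Vc hVcinv hVcsimp hVcsup
      (Vc c₀) (hVcinv c₀) (hVcsimp c₀)
    have hrest : ∑ c ∈ Finset.univ.erase c₀, m c ∈ C := by
      apply Submodule.sum_mem
      intro c hc
      exact hCle c (hpair c c₀ (Finset.ne_of_mem_erase hc)) (hm c)
    have hsplit : m c₀ + ∑ c ∈ Finset.univ.erase c₀, m c = 0 := by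
      rw [Finset.add_sum_erase _ m (Finset.mem_univ c₀)]
      exact hsum
    have hneg : m c₀ = -∑ c ∈ Finset.univ.erase c₀, m c := eq_neg_of_add_eq_zero_left hsplit
    have hmem2 : m c₀ ∈ C := hneg ▸ Submodule.neg_mem _ hrest
    exact (Submodule.disjoint_def.mp hC.disjoint) _ (hm c₀) hmem2
  have hinj : Function.Injective Ψlin := by
    rw [injective_iff_map_eq_zero]
    intro f hf0
    have hvan : ∀ c : Q, (f : X → ↥V') (τ c) = 0 := by
      intro c
      have h1 := hindep (fun c => ρ (τ c)⁻¹ (((f : X → ↥V') (τ c) : M)))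
        (fun c => ⟨((f : X → ↥V') (τ c) : M), ((f : X → ↥V') (τ c)).2, rfl⟩)
        (by rw [← hΨapp]; exact hf0) c
      have h2 : (((f : X → ↥V') (τ c)) : M) = 0 := by
        apply rep_injective ρ (τ c)⁻¹
        rw [h1, map_zero]
      exact Subtype.ext h2
    apply Subtype.ext
    funext x
    set c : Q := Quotient.mk (QuotientGroup.rightRel S) x with hcdef
    have hs : x * (τ c)⁻¹ ∈ S := by
      have h6 : (Quotient.mk (QuotientGroup.rightRel S) (τ c) : Q)
          = Quotient.mk (QuotientGroup.rightRel S) x := by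
        rw [hτdef, hcdef]
        exact Quotient.out_eq _
      exact (QuotientGroup.rightRel_apply).mp (Quotient.exact h6)
    have heq2 : (x * (τ c)⁻¹) * τ c = x := by group
    have h3 : (f : X → ↥V') x = ρext ⟨x * (τ c)⁻¹, hs⟩ ((f : X → ↥V') (τ c)) := by
      conv_lhs => rw [← heq2]
      exact f.2 ⟨x * (τ c)⁻¹, hs⟩ (τ c)
    rw [h3, hvan c, map_zero]
    rfl
  -- surjectivity
  obtain ⟨w₀, hw₀⟩ := exists_ne (0 : ↥V')
  have hf₀mem : (fun x => if h : x ∈ S then ρext ⟨x, h⟩ w₀ else 0) ∈ inducedCarrier k S ρext := by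
    intro s x
    show (if h : (s : X) * x ∈ S then ρext ⟨(s : X) * x, h⟩ w₀ else 0)
      = ρext s (if h : x ∈ S then ρext ⟨x, h⟩ w₀ else 0)
    by_cases hx : x ∈ S
    · rw [dif_pos hx, dif_pos (mul_mem s.2 hx)]
      rw [show (⟨(s : X) * x, mul_mem s.2 hx⟩ : S) = s * ⟨x, hx⟩ from rfl, map_mul]
      rfl
    · rw [dif_neg hx, dif_neg (fun hmem => hx (by
        have : x = (s : X)⁻¹ * ((s : X) * x) := by group
        rw [this]
        exact mul_mem (inv_mem s.2) hmem)), map_zero]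
  have hone : ∀ c : Q, τ c ∈ S ↔ c = Quotient.mk (QuotientGroup.rightRel S) 1 := by
    intro c
    constructor
    · intro hc
      have : (Quotient.mk (QuotientGroup.rightRel S) 1 : Q)
          = Quotient.mk (QuotientGroup.rightRel S) (τ c) := by
        apply Quotient.sound
        exact (QuotientGroup.rightRel_apply).mpr (by simpa using hc)
      rw [this, hτdef, Quotient.out_eq]
    · intro hc
      have h6 : (Quotient.mk (QuotientGroup.rightRel S) (τ c) : Q)
          = Quotient.mk (QuotientGroup.rightRel S) 1 := by
        rw [hτdef, Quotient.out_eq, hc]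
      have := (QuotientGroup.rightRel_apply).mp (Quotient.exact h6)
      simpa using this
  have hΨne : Ψlin ⟨_, hf₀mem⟩ ≠ 0 := by
    rw [hΨapp]
    set c₁ : Q := Quotient.mk (QuotientGroup.rightRel S) 1 with hc₁def
    rw [Finset.sum_eq_single c₁]
    · have hτc₁ : τ c₁ ∈ S := (hone c₁).mpr rfl
      rw [show ((⟨_, hf₀mem⟩ : ↥(inducedCarrier k S ρext)) : X → ↥V') (τ c₁)
        = if h : τ c₁ ∈ S then ρext ⟨τ c₁, h⟩ w₀ else 0 from rfl]
      rw [dif_pos hτc₁, hρext_coe, rep_mul_apply, inv_mul_cancel, map_one]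
      intro h0
      apply hw₀
      apply Subtype.ext
      simpa using h0
    · intro c _ hc
      rw [show ((⟨_, hf₀mem⟩ : ↥(inducedCarrier k S ρext)) : X → ↥V') (τ c)
        = if h : τ c ∈ S then ρext ⟨τ c, h⟩ w₀ else 0 from rfl]
      rw [dif_neg (fun hmem => hc ((hone c).mp hmem))]
      simp
    · intro hmem
      exact absurd (Finset.mem_univ c₁) hmem
  have hsurj : Function.Surjective Ψlin := by
    have hrinv : RepInvariant ρ (LinearMap.range Ψlin) := by
      rintro g v ⟨f, rfl⟩
      exact ⟨(inducedRep k S ρext) g f, hΨequiv g f⟩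
    rcases hρ.2 _ hrinv with h | h
    · exfalso
      apply hΨne
      have : Ψlin ⟨_, hf₀mem⟩ ∈ LinearMap.range Ψlin := ⟨_, rfl⟩
      rw [h] at this
      simpa using this
    · intro v
      have : v ∈ LinearMap.range Ψlin := h ▸ Submodule.mem_top
      exact this
  -- conclusion
  have hbij : Function.Bijective Ψlin := ⟨hinj, hsurj⟩
  refine ⟨(LinearEquiv.ofBijective Ψlin hbij).symm, ?_⟩
  intro g v
  apply (LinearEquiv.ofBijective Ψlin hbij).injective
  rw [LinearEquiv.apply_symm_apply]
  have h1 : (LinearEquiv.ofBijective Ψlin hbij)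
      ((inducedRep k S ρext) g ((LinearEquiv.ofBijective Ψlin hbij).symm v))
      = Ψlin ((inducedRep k S ρext) g ((LinearEquiv.ofBijective Ψlin hbij).symm v)) := rfl
  rw [h1, hΨequiv]
  congr 1
  exact ((LinearEquiv.ofBijective Ψlin hbij).apply_symm_apply v).symm
end

section
/- Let G be a finite group, H a normal subgroup with G/H a p-group, and k a field of characteristic p. Then every block idempotent of kG lies in kH, and every block idempotent of kG is G-stable and primitive in (kH)^G; in particular a primitive idempotent b of (kH)^G (the G-fixed points of kH) is a block of kG. -/
open MonoidAlgebra
open scoped commutatorElement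

namespace BlocksAux

variable {k : Type*} [Field k] {G : Type*} [Group G]

lemma coeff_conj {b : MonoidAlgebra k G}
    (hb : ∀ g : G, single g (1 : k) * b = b * single g 1) (g y : G) :
    b.coeff (g⁻¹ * y) = b.coeff (y * g⁻¹) := by
  have := congrArg (fun x => x.coeff y) (hb g)
  simpa using this

lemma single_commute {x : MonoidAlgebra k G} {g : G}
    (h : single g (1 : k) * x = x * single g 1) (c : k) :
    single g c * x = x * single g c := by
  have hc : single g c = c • single g (1 : k) := by rw [MonoidAlgebra.smul_single', mul_one]
  rw [hc, smul_mul_assoc, h, mul_smul_comm]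

lemma mul_comm_of_single_comm {N : Subgroup G} {x y : MonoidAlgebra k G}
    (hx : ∀ n ∈ N, single n (1 : k) * x = x * single n 1)
    (hy : ∀ g, g ∉ N → y.coeff g = 0) : x * y = y * x := by
  conv_lhs => rw [← sum_coeff_single y]
  conv_rhs => rw [← sum_coeff_single y]
  rw [Finsupp.mul_sum, Finsupp.sum_mul]
  unfold Finsupp.sum
  refine Finset.sum_congr rfl ?_
  intro g hg
  have hgN : g ∈ N := by
    by_contra h
    exact (Finsupp.mem_support_iff.mp hg) (hy g h)
  exact (single_commute (hx g hgN) (y.coeff g)).symm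

lemma central_of_single_comm {x : MonoidAlgebra k G}
    (hx : ∀ g : G, single g (1 : k) * x = x * single g 1) (a : MonoidAlgebra k G) :
    a * x = x * a :=
  (mul_comm_of_single_comm (N := ⊤) (fun n _ => hx n)
    (fun g hg => (hg (Subgroup.mem_top g)).elim)).symm

lemma mul_supp_fiber {Q : Type*} [Group Q] (ψ : G →* Q) {x y : MonoidAlgebra k G} {a a' : Q}
    (hx : ∀ g, ψ g ≠ a → x.coeff g = 0) (hy : ∀ g, ψ g ≠ a' → y.coeff g = 0) :
    ∀ g, ψ g ≠ a * a' → (x * y).coeff g = 0 := by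
  classical
  intro g hg
  rw [MonoidAlgebra.coeff_mul]
  unfold Finsupp.sum
  refine Finset.sum_eq_zero ?_
  intro u _
  refine Finset.sum_eq_zero ?_
  intro v _
  show (if u * v = g then x.coeff u * y.coeff v else 0) = 0
  by_cases huv : u * v = g
  · rw [if_pos huv]
    by_cases hu : ψ u = a
    · have hv : ψ v ≠ a' := by
        intro hv
        apply hg
        rw [← huv, map_mul, hu, hv]
      rw [hy v hv, mul_zero]
    · rw [hx u hu, zero_mul]
  · rw [if_neg huv]

lemma pow_supp_fiber {Q : Type*} [Group Q] (ψ : G →* Q) {x : MonoidAlgebra k G} {a : Q}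
    (hx : ∀ g, ψ g ≠ a → x.coeff g = 0) : ∀ m, ∀ g, ψ g ≠ a ^ m → (x ^ m).coeff g = 0 := by
  classical
  intro m
  induction m with
  | zero =>
    intro g hg
    have hg1 : g ≠ 1 := by
      intro h
      exact hg (by rw [h, map_one, pow_zero])
    rw [pow_zero, MonoidAlgebra.one_def, MonoidAlgebra.coeff_single_apply, if_neg (Ne.symm hg1)]
  | succ m ih =>
    intro g hg
    rw [pow_succ]
    exact mul_supp_fiber ψ ih hx g (by rwa [← pow_succ])

lemma sum_pow_char_pow {R : Type*} [Ring R] {p : ℕ} [hp : Fact p.Prime] [CharP R p]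
    {ι : Type*} (s : Finset ι) (f : ι → R)
    (hc : ∀ i ∈ s, ∀ j ∈ s, Commute (f i) (f j)) (m : ℕ) :
    (∑ i ∈ s, f i) ^ p ^ m = ∑ i ∈ s, f i ^ p ^ m := by
  classical
  induction s using Finset.cons_induction with
  | empty => simp [zero_pow (pow_ne_zero m hp.out.ne_zero)]
  | cons i s hi ih =>
    rw [Finset.sum_cons, Finset.sum_cons]
    have hcomm : Commute (f i) (∑ j ∈ s, f j) :=
      Commute.sum_right s f (f i) fun j hj =>
        hc i (Finset.mem_cons_self i s) j (Finset.mem_cons_of_mem hj)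
    rw [add_pow_char_pow_of_commute _ _ hcomm,
      ih fun a ha b hb => hc a (Finset.mem_cons_of_mem ha) b (Finset.mem_cons_of_mem hb)]

variable [Finite G]

lemma supp_step {p : ℕ} (hp : p.Prime) [CharP k p] (H : Subgroup G) (hH : H.Normal)
    (hGH : IsPGroup p (G ⧸ H)) (b : MonoidAlgebra k G)
    (hb : ∀ g : G, single g (1 : k) * b = b * single g 1) (hidem : b * b = b) (n : ℕ)
    (ihn : ∀ g, g ∉ (derivedSeries (G ⧸ H) n).comap (QuotientGroup.mk' H) → b.coeff g = 0) :
    ∀ g, g ∉ (derivedSeries (G ⧸ H) (n + 1)).comap (QuotientGroup.mk' H) → b.coeff g = 0 := by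
  classical
  haveI := hH
  haveI : Fact p.Prime := ⟨hp⟩
  set N : Subgroup G := (derivedSeries (G ⧸ H) n).comap (QuotientGroup.mk' H) with hNdef
  set N₁ : Subgroup G := (derivedSeries (G ⧸ H) (n + 1)).comap (QuotientGroup.mk' H) with hN₁def
  haveI hNorm : N₁.Normal := (derivedSeries_normal _ _).comap _
  set ψ : G →* G ⧸ N₁ := QuotientGroup.mk' N₁ with hψdef
  have hψ1 : ∀ g : G, ψ g = 1 ↔ g ∈ N₁ := fun g => QuotientGroup.eq_one_iff g
  have hbc : ∀ g y : G, b.coeff (g⁻¹ * y) = b.coeff (y * g⁻¹) := coeff_conj hb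
  -- key commutator fact
  have hkey : ∀ nn ∈ N, ∀ y ∈ N, ψ (nn⁻¹ * y) = ψ (y * nn⁻¹) := by
    intro nn hnn y hy
    have hmem : (y * nn⁻¹)⁻¹ * (nn⁻¹ * y) ∈ N₁ := by
      have heq : (y * nn⁻¹)⁻¹ * (nn⁻¹ * y) = ⁅nn, y⁻¹⁆ := by
        rw [commutatorElement_def]
        group
      rw [heq, hN₁def, Subgroup.mem_comap, map_commutatorElement, derivedSeries_succ]
      refine Subgroup.commutator_mem_commutator (Subgroup.mem_comap.mp hnn) ?_
      rw [map_inv]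
      exact (derivedSeries (G ⧸ H) n).inv_mem (Subgroup.mem_comap.mp hy)
    have := (QuotientGroup.eq (s := N₁) (a := y * nn⁻¹) (b := nn⁻¹ * y)).mpr hmem
    exact this.symm
  -- components
  let f : (G ⧸ N₁) → MonoidAlgebra k G := fun a => ofCoeff (b.coeff.filter (fun g => ψ g = a))
  have hf_apply : ∀ a g, (f a).coeff g = if ψ g = a then b.coeff g else 0 := fun a g => rfl
  have hf_supp : ∀ a g, ψ g ≠ a → (f a).coeff g = 0 := by
    intro a g h
    rw [hf_apply, if_neg h]
  have hf_N : ∀ a g, g ∉ N → (f a).coeff g = 0 := by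
    intro a g h
    rw [hf_apply, ihn g h, ite_self]
  haveI : Fintype (G ⧸ N₁) := Fintype.ofFinite _
  have hsum : ∑ a : G ⧸ N₁, f a = b := by
    ext g
    rw [coeff_sum, Finsupp.finset_sum_apply]
    simp only [hf_apply]
    rw [Finset.sum_ite_eq, if_pos (Finset.mem_univ _)]
  have hf_sc : ∀ a : G ⧸ N₁, ∀ nn ∈ N, single nn (1 : k) * f a = f a * single nn 1 := by
    intro a nn hnn
    ext y
    rw [MonoidAlgebra.coeff_single_mul_apply, MonoidAlgebra.coeff_mul_single_apply, one_mul, mul_one]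
    by_cases hz : b.coeff (nn⁻¹ * y) = 0
    · have hz' : b.coeff (y * nn⁻¹) = 0 := by rw [← hbc]; exact hz
      rw [hf_apply, hf_apply, hz, hz', ite_self, ite_self]
    · have hmem : nn⁻¹ * y ∈ N := by
        by_contra h
        exact hz (ihn _ h)
      have hyN : y ∈ N := by
        have := N.mul_mem hnn hmem
        rwa [mul_inv_cancel_left] at this
      rw [hf_apply, hf_apply, hkey nn hnn y hyN, hbc nn y]
  have hcomm : ∀ a a' : G ⧸ N₁, Commute (f a) (f a') := fun a a' =>
    mul_comm_of_single_comm (hf_sc a) (hf_N a')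
  -- charP of the monoid algebra
  haveI : CharP (MonoidAlgebra k G) p :=
    charP_of_injective_algebraMap (algebraMap k (MonoidAlgebra k G)).injective p
  -- the quotient is a p-group
  have hQ1 : IsPGroup p (G ⧸ N₁) := by
    intro q1
    obtain ⟨g, rfl⟩ := QuotientGroup.mk'_surjective N₁ q1
    obtain ⟨m, hm⟩ := hGH (QuotientGroup.mk' H g)
    refine ⟨m, ?_⟩
    have hgH : g ^ p ^ m ∈ H := by
      rw [← QuotientGroup.eq_one_iff (N := H)]
      rw [← map_pow] at hm
      exact hm
    have hgN₁ : g ^ p ^ m ∈ N₁ := by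
      rw [hN₁def, Subgroup.mem_comap]
      have : (QuotientGroup.mk' H) (g ^ p ^ m) = 1 := (QuotientGroup.eq_one_iff _).mpr hgH
      rw [this]
      exact (derivedSeries (G ⧸ H) (n + 1)).one_mem
    rw [← map_pow]
    exact (QuotientGroup.eq_one_iff _).mpr hgN₁
  obtain ⟨m, hm⟩ := hQ1.exists_card_eq
  -- b = b ^ (p ^ m)
  have hpow : ∀ t : ℕ, b ^ (t + 1) = b := by
    intro t
    induction t with
    | zero => rw [pow_one]
    | succ t ih => rw [pow_succ, ih, hidem]
  have hbpow : b ^ p ^ m = b := by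
    have hpos : 0 < p ^ m := pow_pos hp.pos m
    have := hpow (p ^ m - 1)
    rwa [Nat.sub_add_cancel hpos] at this
  have hb_eq : b = ∑ a : G ⧸ N₁, f a ^ p ^ m := by
    conv_lhs => rw [← hbpow, ← hsum]
    exact sum_pow_char_pow _ _ (fun i _ j _ => hcomm i j) m
  intro g hg
  have hg1 : ψ g ≠ 1 := fun h => hg ((hψ1 g).mp h)
  rw [hb_eq, coeff_sum, Finsupp.finset_sum_apply]
  refine Finset.sum_eq_zero ?_
  intro a _
  refine pow_supp_fiber ψ (hf_supp a) (p ^ m) g ?_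
  have ha : a ^ p ^ m = 1 := by rw [← hm]; exact pow_card_eq_one'
  rw [ha]
  exact hg1

lemma supp_in_H {p : ℕ} (hp : p.Prime) [CharP k p] (H : Subgroup G) (hH : H.Normal)
    (hGH : IsPGroup p (G ⧸ H)) (b : MonoidAlgebra k G)
    (hb : ∀ g : G, single g (1 : k) * b = b * single g 1) (hidem : b * b = b) :
    ∀ g, g ∉ H → b.coeff g = 0 := by
  haveI := hH
  haveI : Fact p.Prime := ⟨hp⟩
  haveI : Group.IsNilpotent (G ⧸ H) := hGH.isNilpotent
  obtain ⟨n₀, hn₀⟩ := (inferInstance : Group.IsSolvable (G ⧸ H)).solvable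
  have key : ∀ n : ℕ, ∀ g, g ∉ (derivedSeries (G ⧸ H) n).comap (QuotientGroup.mk' H) →
      b.coeff g = 0 := by
    intro n
    induction n with
    | zero =>
      intro g hg
      exact absurd (by rw [derivedSeries_zero]; exact Subgroup.mem_top _) hg
    | succ n ih => exact supp_step hp H hH hGH b hb hidem n ih
  intro g hg
  refine key n₀ g ?_
  rwa [hn₀, MonoidHom.comap_bot, QuotientGroup.ker_mk']

end BlocksAux

/-- Let `H ⊴ G` with `G/H` a `p`-group, `char k = p`. An element
`b` of `kG` is a block of `kG` (a primitive idempotent of `Z(kG)`) if and only if it is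
supported on `H`, `G`-stable (commutes with all group elements), and is a primitive
idempotent of `(kH)^G`.  In particular every block of `kG` lies in `kH` and the
inclusion `kH ⊆ kG` induces a bijection between primitive idempotents of `(kH)^G`
and blocks of `kG`. -/
theorem blocks_of_p_power_index_normal_subgroup
    {p : ℕ} (hp : p.Prime) (k : Type*) [Field k] [IsAlgClosed k] [CharP k p]
    (G : Type*) [Group G] [Finite G] (H : Subgroup G) (hH : H.Normal)
    (hGH : IsPGroup p (G ⧸ H)) (b : MonoidAlgebra k G) :
    ((∀ a : MonoidAlgebra k G, a * b = b * a) ∧ b * b = b ∧ b ≠ 0 ∧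
      (∀ c d : MonoidAlgebra k G,
        (∀ a, a * c = c * a) → (∀ a, a * d = d * a) →
        c * c = c → d * d = d → b = c + d → c * d = 0 → c = 0 ∨ d = 0))
    ↔
    ((∀ g : G, g ∉ H → b.coeff g = 0) ∧
      (∀ g : G, MonoidAlgebra.single g (1 : k) * b = b * MonoidAlgebra.single g (1 : k)) ∧
      b * b = b ∧ b ≠ 0 ∧
      (∀ c d : MonoidAlgebra k G,
        (∀ g : G, g ∉ H → c.coeff g = 0) → (∀ g : G, g ∉ H → d.coeff g = 0) →
        (∀ g : G, MonoidAlgebra.single g (1 : k) * c = c * MonoidAlgebra.single g (1 : k)) →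
        (∀ g : G, MonoidAlgebra.single g (1 : k) * d = d * MonoidAlgebra.single g (1 : k)) →
        c * c = c → d * d = d → b = c + d → c * d = 0 → c = 0 ∨ d = 0)) := by
  constructor
  · rintro ⟨hcent, hidem, hne, hprim⟩
    have hb_single : ∀ g : G, MonoidAlgebra.single g (1 : k) * b
        = b * MonoidAlgebra.single g (1 : k) := fun g => hcent _
    refine ⟨BlocksAux.supp_in_H hp H hH hGH b hb_single hidem, hb_single, hidem, hne, ?_⟩
    intro c d _ _ hc hd hcc hdd hbcd hcd
    exact hprim c d (BlocksAux.central_of_single_comm hc) (BlocksAux.central_of_single_comm hd)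
      hcc hdd hbcd hcd
  · rintro ⟨hsupp, hb_single, hidem, hne, hprim⟩
    refine ⟨BlocksAux.central_of_single_comm hb_single, hidem, hne, ?_⟩
    intro c d hc hd hcc hdd hbcd hcd
    have hc_single : ∀ g : G, MonoidAlgebra.single g (1 : k) * c
        = c * MonoidAlgebra.single g (1 : k) := fun g => hc _
    have hd_single : ∀ g : G, MonoidAlgebra.single g (1 : k) * d
        = d * MonoidAlgebra.single g (1 : k) := fun g => hd _
    exact hprim c d (BlocksAux.supp_in_H hp H hH hGH c hc_single hcc)
      (BlocksAux.supp_in_H hp H hH hGH d hd_single hdd)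
      hc_single hd_single hcc hdd hbcd hcd
end

section
/- Let k be a field of characteristic p and G a finite group with a p-subgroup P. The Brauer construction is compatible with quotients: if Q ⊴ P are p-subgroups and A is a p-permutation P-algebra (P stabilizes a basis of A), then the Brauer homomorphisms induce a k-algebra isomorphism (A(Q))(P/Q) ≅ A(P), where A(Q) is regarded as a P/Q-algebra. -/
/-- The `k`-submodule `A^R` of `R`-fixed points of a `P`-algebra `A`. -/
def fixedSubmodule (k : Type*) [CommSemiring k] (P : Type*) [Group P]
    (A : Type*) [Ring A] [Algebra k A] [MulSemiringAction P A] [SMulCommClass P k A]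
    (R : Subgroup P) : Submodule k A where
  carrier := {a | ∀ u ∈ R, u • a = a}
  add_mem' := by intro a b ha hb u hu; rw [smul_add, ha u hu, hb u hu]
  zero_mem' := by intro u hu; rw [smul_zero]
  smul_mem' := by intro c a ha u hu; rw [smul_comm, ha u hu]

/-- The relative trace map `Tr_S^R : A^S → A^R`, given by summing conjugates over a set
of representatives of `R/S`. -/
noncomputable def relTr (k : Type*) [CommSemiring k] (P : Type*) [Group P] [Finite P]
    (A : Type*) [Ring A] [Algebra k A] [MulSemiringAction P A] [SMulCommClass P k A]
    (S R : Subgroup P) (a : A) : A :=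
  letI := Fintype.ofFinite (↥R ⧸ S.subgroupOf R)
  ∑ c : ↥R ⧸ S.subgroupOf R, (((Quotient.out c : ↥R) : P) • a)

/-- The submodule `Σ_{S < R} Tr_S^R (A^S)` whose quotient defines the Brauer quotient
`A(R) = A^R / Σ_{S<R} Tr_S^R(A^S)`. -/
noncomputable def traceModule (k : Type*) [CommSemiring k] (P : Type*) [Group P] [Finite P]
    (A : Type*) [Ring A] [Algebra k A] [MulSemiringAction P A] [SMulCommClass P k A]
    (R : Subgroup P) : Submodule k A :=
  Submodule.span k
    {x | ∃ S : Subgroup P, S < R ∧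
      ∃ a ∈ fixedSubmodule k P A S, x = relTr k P A S R a}

/-- The submodule `Σ_{Q ≤ S < R} Tr_S^R (A^S)`; its image under `Br_Q` is the sum of the
images of the relative traces `Tr_{S/Q}^{R/Q}` on the Brauer quotient `A(Q)`. -/
noncomputable def midTraceModule (k : Type*) [CommSemiring k] (P : Type*) [Group P] [Finite P]
    (A : Type*) [Ring A] [Algebra k A] [MulSemiringAction P A] [SMulCommClass P k A]
    (Q R : Subgroup P) : Submodule k A :=
  Submodule.span k
    {x | ∃ S : Subgroup P, Q ≤ S ∧ S < R ∧
      ∃ a ∈ fixedSubmodule k P A S, x = relTr k P A S R a}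

set_option linter.unusedSectionVars false

section Aux

variable {k : Type*} [Field k] {P : Type*} [Group P] [Finite P]
  {A : Type*} [Ring A] [Algebra k A] [MulSemiringAction P A] [SMulCommClass P k A]
  {s : Set A}

theorem mem_fixedSubmodule {R : Subgroup P} {a : A} :
    a ∈ fixedSubmodule k P A R ↔ ∀ u ∈ R, u • a = a := Iff.rfl

def permS (hs : ∀ (u : P), ∀ x ∈ s, u • x ∈ s) (u : P) : Equiv.Perm ↥s where
  toFun b := ⟨u • (b : A), hs u b b.2⟩
  invFun b := ⟨u⁻¹ • (b : A), hs u⁻¹ b b.2⟩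
  left_inv b := Subtype.ext (inv_smul_smul u (b : A))
  right_inv b := Subtype.ext (smul_inv_smul u (b : A))

theorem smul_relTr {S R : Subgroup P} (a : A) (ha : ∀ u ∈ S, u • a = a)
    {u : P} (hu : u ∈ R) : u • relTr k P A S R a = relTr k P A S R a := by
  letI := Fintype.ofFinite (↥R ⧸ S.subgroupOf R)
  have hwd : ∀ (r r' : ↥R), (QuotientGroup.leftRel (S.subgroupOf R)) r r' →
      (fun r : ↥R => (r : P) • a) r = (fun r : ↥R => (r : P) • a) r' := by
    intro r r' hrr
    rw [QuotientGroup.leftRel_apply] at hrr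
    have h1 : ((r⁻¹ * r' : ↥R) : P) ∈ S := hrr
    have h2 : (r' : P) = (r : P) * ((r⁻¹ * r' : ↥R) : P) := by push_cast; group
    show (r : P) • a = (r' : P) • a
    rw [h2, mul_smul, ha _ h1]
  set g : ↥R ⧸ S.subgroupOf R → A := Quotient.lift (fun r : ↥R => (r : P) • a) hwd with hgdef
  have hgout : ∀ c, g c = ((Quotient.out c : ↥R) : P) • a := by
    intro c
    conv_lhs => rw [← Quotient.out_eq c]
    rfl
  have hsum : relTr k P A S R a = ∑ c, g c := by
    rw [relTr]
    exact Finset.sum_congr rfl fun c _ => (hgout c).symm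
  have hrel : ∀ (x y : ↥R), (QuotientGroup.leftRel (S.subgroupOf R)) x y ↔
      (QuotientGroup.leftRel (S.subgroupOf R)) (Equiv.mulLeft (⟨u, hu⟩ : ↥R) x)
        (Equiv.mulLeft (⟨u, hu⟩ : ↥R) y) := by
    intro x y
    rw [QuotientGroup.leftRel_apply, QuotientGroup.leftRel_apply]
    have h5 : (Equiv.mulLeft (⟨u, hu⟩ : ↥R) x)⁻¹ * (Equiv.mulLeft (⟨u, hu⟩ : ↥R) y)
        = x⁻¹ * y := by
      simp only [Equiv.coe_mulLeft]
      group
    rw [h5]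
  set ev := Quotient.congr (Equiv.mulLeft (⟨u, hu⟩ : ↥R)) hrel with hevdef
  have hmul : ∀ (c : ↥R ⧸ S.subgroupOf R), g (ev c) = u • g c := by
    intro c
    induction c using Quotient.inductionOn with
    | h r =>
      have h6 : ev (Quotient.mk _ r) = Quotient.mk _ ((⟨u, hu⟩ : ↥R) * r) := rfl
      rw [h6]
      show (((⟨u, hu⟩ : ↥R) * r : ↥R) : P) • a = u • g (Quotient.mk _ r)
      have h7 : g (Quotient.mk _ r) = (r : P) • a := rfl
      rw [h7]
      push_cast
      rw [mul_smul]
  rw [hsum, Finset.smul_sum]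
  calc (∑ c, u • g c) = ∑ c, g (ev c) := by
        refine Finset.sum_congr rfl fun c _ => ?_
        rw [hmul]
  _ = ∑ c, g c := Equiv.sum_comp ev g

theorem relTr_mem_fixed {S R : Subgroup P} (a : A) (ha : ∀ u ∈ S, u • a = a) :
    relTr k P A S R a ∈ fixedSubmodule k P A R :=
  fun _ hu => smul_relTr a ha hu

theorem stab_lt {R : Subgroup P} {b : ↥s} (hbnf : ¬(∀ u ∈ R, u • (b : A) = (b : A))) :
    MulAction.stabilizer P (b : A) ⊓ R < R := by
  refine lt_of_le_of_ne inf_le_right (fun he => hbnf fun u hu => ?_)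
  have h1 : u ∈ MulAction.stabilizer P (b : A) ⊓ R := by rw [he]; exact hu
  exact h1.1

theorem traceModule_mul_left (a : A) (ha : ∀ u : P, u • a = a) {b : A}
    (hb : b ∈ traceModule k P A ⊤) : a * b ∈ traceModule k P A ⊤ := by
  rw [traceModule] at hb ⊢
  induction hb using Submodule.span_induction with
  | mem y hy =>
    obtain ⟨S, hS, c, hc, rfl⟩ := hy
    have key : a * relTr k P A S ⊤ c = relTr k P A S ⊤ (a * c) := by
      letI := Fintype.ofFinite (↥(⊤ : Subgroup P) ⧸ S.subgroupOf ⊤)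
      rw [relTr, relTr, Finset.mul_sum]
      apply Finset.sum_congr rfl
      intro x _
      rw [smul_mul', ha _]
    rw [key]
    exact Submodule.subset_span ⟨S, hS, a * c,
      fun v hv => by rw [smul_mul', ha v, hc v hv], rfl⟩
  | zero => rw [mul_zero]; exact Submodule.zero_mem _
  | add x y _ _ hx hy => rw [mul_add]; exact Submodule.add_mem _ hx hy
  | smul r x _ hx => rw [mul_smul_comm]; exact Submodule.smul_mem _ r hx

theorem traceModule_mul_right (a : A) (ha : ∀ u : P, u • a = a) {b : A}
    (hb : b ∈ traceModule k P A ⊤) : b * a ∈ traceModule k P A ⊤ := by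
  rw [traceModule] at hb ⊢
  induction hb using Submodule.span_induction with
  | mem y hy =>
    obtain ⟨S, hS, c, hc, rfl⟩ := hy
    have key : relTr k P A S ⊤ c * a = relTr k P A S ⊤ (c * a) := by
      letI := Fintype.ofFinite (↥(⊤ : Subgroup P) ⧸ S.subgroupOf ⊤)
      rw [relTr, relTr, Finset.sum_mul]
      apply Finset.sum_congr rfl
      intro x _
      rw [smul_mul', ha _]
    rw [key]
    exact Submodule.subset_span ⟨S, hS, c * a,
      fun v hv => by rw [smul_mul', ha v, hc v hv], rfl⟩
  | zero => rw [zero_mul]; exact Submodule.zero_mem _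
  | add x y _ _ hx hy => rw [add_mul]; exact Submodule.add_mem _ hx hy
  | smul r x _ hx => rw [smul_mul_assoc]; exact Submodule.smul_mem _ r hx

def KK (B : Module.Basis ↥s k A) (R : Subgroup P) : Submodule k A where
  carrier := {a | (∀ u ∈ R, u • a = a) ∧
    ∀ x : ↥s, (∀ u ∈ R, u • (x : A) = (x : A)) → B.repr a x = 0}
  add_mem' := by
    rintro a b ⟨ha1, ha2⟩ ⟨hb1, hb2⟩
    exact ⟨fun u hu => by rw [smul_add, ha1 u hu, hb1 u hu],
      fun x hx => by rw [map_add, Finsupp.add_apply, ha2 x hx, hb2 x hx, add_zero]⟩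
  zero_mem' := ⟨fun u _ => smul_zero u, fun x _ => by simp⟩
  smul_mem' := by
    rintro c a ⟨h1, h2⟩
    exact ⟨fun u hu => by rw [smul_comm, h1 u hu],
      fun x hx => by rw [map_smul, Finsupp.smul_apply, h2 x hx, smul_zero]⟩

noncomputable def piQ (B : Module.Basis ↥s k A) (Q : Subgroup P) (a : A) : A :=
  letI : DecidablePred (fun b : ↥s => ∀ u ∈ Q, u • (b : A) = (b : A)) := Classical.decPred _
  ∑ x ∈ (B.repr a).support.filter (fun b : ↥s => ∀ u ∈ Q, u • (b : A) = (b : A)),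
    B.repr a x • ((x : ↥s) : A)

theorem piQ_fixed (B : Module.Basis ↥s k A) (Q : Subgroup P) (a : A) :
    ∀ u ∈ Q, u • piQ B Q a = piQ B Q a := by
  classical
  intro u hu
  rw [piQ, Finset.smul_sum]
  apply Finset.sum_congr rfl
  intro b hbmem
  have hbf : ∀ v ∈ Q, v • (b : A) = (b : A) := (Finset.mem_filter.mp hbmem).2
  rw [smul_comm, hbf u hu]

theorem fixed_smul_of_fixed {Q : Subgroup P} (hQ : Q.Normal) {x : A}
    (h : ∀ q ∈ Q, q • x = x) (u : P) : ∀ q ∈ Q, q • (u • x) = u • x := by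
  intro q hq
  have h1 : u⁻¹ * q * u ∈ Q := by
    have h2 := hQ.conj_mem q hq u⁻¹
    simpa [mul_assoc] using h2
  calc q • (u • x) = (q * u) • x := (mul_smul q u x).symm
  _ = (u * (u⁻¹ * q * u)) • x := by congr 1; group
  _ = u • ((u⁻¹ * q * u) • x) := mul_smul _ _ _
  _ = u • x := by rw [h _ h1]

variable (hs : ∀ (u : P), ∀ x ∈ s, u • x ∈ s) (B : Module.Basis ↥s k A)
  (hB : ∀ b : ↥s, (B b : A) = (b : A))

include hs hB

theorem repr_smul_eq (u : P) (a : A) :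
    B.repr (u • a) = Finsupp.equivMapDomain (permS hs u) (B.repr a) := by
  have h : (B.repr.toLinearMap ∘ₗ DistribSMul.toLinearMap k A u)
      = ((Finsupp.domLCongr (permS hs u) :
            (↥s →₀ k) ≃ₗ[k] (↥s →₀ k)).toLinearMap ∘ₗ B.repr.toLinearMap) := by
    apply B.ext
    intro b
    simp only [LinearMap.comp_apply, DistribSMul.toLinearMap_apply,
      LinearEquiv.coe_toLinearMap, Module.Basis.repr_self, Finsupp.domLCongr_apply,
      Finsupp.domCongr_apply, Finsupp.equivMapDomain_single]
    rw [hB]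
    have h2 : u • (b : A) = ((permS hs u b : ↥s) : A) := rfl
    rw [h2, ← hB (permS hs u b), Module.Basis.repr_self]
  have h3 := congrArg (fun f => f a) h
  simpa using h3

theorem repr_smul_apply (u : P) (a : A) (b : ↥s) :
    B.repr (u • a) (permS hs u b) = B.repr a b := by
  rw [repr_smul_eq hs B hB, Finsupp.equivMapDomain_apply, Equiv.symm_apply_apply]

theorem repr_smul_apply' (u : P) (a : A) (x : ↥s) :
    B.repr (u • a) x = B.repr a ((permS hs u).symm x) := by
  rw [repr_smul_eq hs B hB, Finsupp.equivMapDomain_apply]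

theorem repr_relTr_eq_zero {p : ℕ} (hp : p.Prime) [CharP k p] (hP : IsPGroup p P)
    {S R : Subgroup P} (hSR : S < R) (a : A) (b : ↥s) (hb : ∀ u ∈ R, u • (b : A) = (b : A)) :
    B.repr (relTr k P A S R a) b = 0 := by
  haveI := Fact.mk hp
  letI := Fintype.ofFinite (↥R ⧸ S.subgroupOf R)
  have hterm : ∀ c : ↥R ⧸ S.subgroupOf R,
      B.repr (((Quotient.out c : ↥R) : P) • a) b = B.repr a b := by
    intro c
    rw [repr_smul_apply' hs B hB]
    congr 1
    apply Subtype.ext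
    show ((Quotient.out c : ↥R) : P)⁻¹ • (b : A) = (b : A)
    exact hb _ (inv_mem (Quotient.out c).2)
  have : B.repr (relTr k P A S R a) b
      = ∑ c : ↥R ⧸ S.subgroupOf R, B.repr (((Quotient.out c : ↥R) : P) • a) b := by
    rw [relTr, map_sum, Finsupp.finset_sum_apply]
  rw [this, Finset.sum_congr rfl (fun c _ => hterm c), Finset.sum_const, Finset.card_univ,
    nsmul_eq_mul]
  -- card is divisible by p
  obtain ⟨n, hn⟩ := IsPGroup.iff_card.mp (hP.to_subgroup R)
  obtain ⟨m, hm, hcard⟩ := (Nat.dvd_prime_pow hp).mp (hn ▸ Subgroup.index_dvd_card (G := ↥R) (S.subgroupOf R))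
  have hm0 : m ≠ 0 := by
    intro h0
    rw [h0, pow_zero] at hcard
    exact hSR.not_ge (Subgroup.subgroupOf_eq_top.mp (Subgroup.index_eq_one.mp hcard))
  have hcardT : Fintype.card (↥R ⧸ S.subgroupOf R) = p ^ m := by
    rw [← Nat.card_eq_fintype_card, ← hcard, Subgroup.index]
  rw [hcardT]
  have : ((p : k)) ^ m = 0 := by
    rw [CharP.cast_eq_zero k p, zero_pow hm0]
  push_cast
  rw [this, zero_mul]

theorem repr_single (b : ↥s) : B.repr ((b : ↥s) : A) = Finsupp.single b 1 := by
  rw [← hB b]; exact B.repr_self b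

open Classical in
theorem repr_relTr_orbit (R : Subgroup P) (b x : ↥s) :
    B.repr (relTr k P A (MulAction.stabilizer P (b : A) ⊓ R) R ((b : ↥s) : A)) x
      = if ∃ u ∈ R, u • (b : A) = (x : A) then 1 else 0 := by
  classical
  letI := Fintype.ofFinite (↥R ⧸ (MulAction.stabilizer P (b : A) ⊓ R).subgroupOf R)
  set f : (↥R ⧸ (MulAction.stabilizer P (b : A) ⊓ R).subgroupOf R) → ↥s :=
    fun c => permS hs ((Quotient.out c : ↥R) : P) b with hfdef
  have hfval : ∀ c, ((f c : ↥s) : A) = ((Quotient.out c : ↥R) : P) • (b : A) := fun _ => rfl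
  have hfinj : Function.Injective f := by
    intro c c' hcc
    have h1 : ((Quotient.out c : ↥R) : P) • (b : A)
        = ((Quotient.out c' : ↥R) : P) • (b : A) := by
      rw [← hfval, ← hfval, hcc]
    have h2 : ((Quotient.out c')⁻¹ * Quotient.out c : ↥R)
        ∈ (MulAction.stabilizer P (b : A) ⊓ R).subgroupOf R := by
      rw [Subgroup.mem_subgroupOf]
      refine Subgroup.mem_inf.mpr ⟨?_, SetLike.coe_mem _⟩
      show (((Quotient.out c')⁻¹ * Quotient.out c : ↥R) : P) • (b : A) = (b : A)
      push_cast
      rw [mul_smul, h1, inv_smul_smul]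
    have h3 : (QuotientGroup.mk (Quotient.out c') :
        ↥R ⧸ (MulAction.stabilizer P (b : A) ⊓ R).subgroupOf R)
          = QuotientGroup.mk (Quotient.out c) := QuotientGroup.eq.mpr h2
    rw [QuotientGroup.out_eq', QuotientGroup.out_eq'] at h3
    exact h3.symm
  have hterm : ∀ c, B.repr (((Quotient.out c : ↥R) : P) • ((b : ↥s) : A)) x
      = if f c = x then (1 : k) else 0 := by
    intro c
    rw [repr_smul_eq hs B hB, repr_single hs B hB, Finsupp.equivMapDomain_single,
      Finsupp.single_apply]
  have hrw : B.repr (relTr k P A (MulAction.stabilizer P (b : A) ⊓ R) R ((b : ↥s) : A)) x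
      = ∑ c, if f c = x then (1 : k) else 0 := by
    rw [relTr, map_sum, Finsupp.finset_sum_apply]
    exact Finset.sum_congr rfl fun c _ => hterm c
  rw [hrw]
  have hiff : (∃ c, f c = x) ↔ (∃ u ∈ R, u • (b : A) = (x : A)) := by
    constructor
    · rintro ⟨c, rfl⟩
      exact ⟨((Quotient.out c : ↥R) : P), SetLike.coe_mem _, (hfval c).symm⟩
    · rintro ⟨u, hu, hux⟩
      refine ⟨QuotientGroup.mk (⟨u, hu⟩ : ↥R), ?_⟩
      obtain ⟨h, hh⟩ := QuotientGroup.mk_out_eq_mul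
        ((MulAction.stabilizer P (b : A) ⊓ R).subgroupOf R) (⟨u, hu⟩ : ↥R)
      apply Subtype.ext
      rw [hfval, hh]
      push_cast
      have hst : ((h : ↥R) : P) • (b : A) = (b : A) :=
        (Subgroup.mem_inf.mp (Subgroup.mem_subgroupOf.mp h.2)).1
      rw [mul_smul, hst, hux]
  by_cases hex : ∃ u ∈ R, u • (b : A) = (x : A)
  · rw [if_pos hex]
    obtain ⟨c0, hc0⟩ := hiff.mpr hex
    rw [Finset.sum_eq_single c0]
    · rw [if_pos hc0]
    · intro c _ hc
      rw [if_neg (fun hfc => hc (hfinj (hfc.trans hc0.symm)))]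
    · intro hmem
      exact absurd (Finset.mem_univ c0) hmem
  · rw [if_neg hex]
    apply Finset.sum_eq_zero
    intro c _
    rw [if_neg (fun hfc => hex (hiff.mp ⟨c, hfc⟩))]

theorem repr_relTr_orbit_mem {R : Subgroup P} {b x : ↥s} (hex : ∃ u ∈ R, u • (b : A) = (x : A)) :
    B.repr (relTr k P A (MulAction.stabilizer P (b : A) ⊓ R) R ((b : ↥s) : A)) x = 1 := by
  classical
  rw [repr_relTr_orbit hs B hB R b x]
  exact if_pos hex

theorem repr_relTr_orbit_not_mem {R : Subgroup P} {b x : ↥s}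
    (hex : ¬ ∃ u ∈ R, u • (b : A) = (x : A)) :
    B.repr (relTr k P A (MulAction.stabilizer P (b : A) ⊓ R) R ((b : ↥s) : A)) x = 0 := by
  classical
  rw [repr_relTr_orbit hs B hB R b x]
  exact if_neg hex

theorem mem_span_orbits {R : Subgroup P} {C : Set ↥s}
    (a : A) (hfix : ∀ u ∈ R, u • a = a)
    (hsupp : ∀ x ∈ (B.repr a).support, x ∈ C)
    (h0 : ∀ x : ↥s, (∀ u ∈ R, u • (x : A) = (x : A)) → B.repr a x = 0) :
    a ∈ Submodule.span k {y | ∃ b : ↥s, b ∈ C ∧ ¬(∀ u ∈ R, u • (b : A) = (b : A)) ∧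
        y = relTr k P A (MulAction.stabilizer P (b : A) ⊓ R) R (b : A)} := by
  classical
  suffices H : ∀ n (a : A), (∀ u ∈ R, u • a = a) → (∀ x ∈ (B.repr a).support, x ∈ C) →
      (∀ x : ↥s, (∀ u ∈ R, u • (x : A) = (x : A)) → B.repr a x = 0) →
      (B.repr a).support.card = n →
      a ∈ Submodule.span k {y | ∃ b : ↥s, b ∈ C ∧ ¬(∀ u ∈ R, u • (b : A) = (b : A)) ∧
        y = relTr k P A (MulAction.stabilizer P (b : A) ⊓ R) R (b : A)} by
    exact H _ a hfix hsupp h0 rfl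
  intro n
  induction n using Nat.strong_induction_on with
  | _ n ih =>
  intro a hfix hsupp h0 hn
  rcases Nat.eq_zero_or_pos n with hz | hpos
  · have hsupp0 : (B.repr a).support = ∅ := Finset.card_eq_zero.mp (by rw [hn, hz])
    have hr0 : B.repr a = 0 := Finsupp.support_eq_empty.mp hsupp0
    have ha0 : a = 0 := by
      have h4 := congrArg B.repr.symm hr0
      simpa using h4
    rw [ha0]
    exact Submodule.zero_mem _
  · have hne : (B.repr a).support.Nonempty := Finset.card_pos.mp (by rw [hn]; exact hpos)
    obtain ⟨b, hb⟩ := hne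
    have hbC : b ∈ C := hsupp b hb
    have hbne : B.repr a b ≠ 0 := Finsupp.mem_support_iff.mp hb
    have hbnf : ¬(∀ u ∈ R, u • (b : A) = (b : A)) := fun hf => hbne (h0 b hf)
    set c := B.repr a b with hc
    set σ := relTr k P A (MulAction.stabilizer P (b : A) ⊓ R) R ((b : ↥s) : A) with hσ
    have hbfixS : ∀ v ∈ MulAction.stabilizer P (b : A) ⊓ R, v • ((b : ↥s) : A) = (b : A) :=
      fun v hv => hv.1
    have hσfix : ∀ u ∈ R, u • σ = σ := by
      intro u hu
      rw [hσ]
      exact smul_relTr _ hbfixS hu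
    have hconst : ∀ x : ↥s, (∃ u ∈ R, u • (b : A) = (x : A)) → B.repr a x = c := by
      rintro x ⟨u, hu, hux⟩
      have hx : x = permS hs u b := Subtype.ext hux.symm
      have h8 := repr_smul_apply hs B hB u a b
      rw [hfix u hu] at h8
      rw [hc, hx, h8]
    set a' := a - c • σ with ha'
    have hrepr'mem : ∀ x : ↥s, (∃ u ∈ R, u • (b : A) = (x : A)) → B.repr a' x = 0 := by
      intro x hex
      rw [ha', map_sub, map_smul, Finsupp.sub_apply, Finsupp.smul_apply, hσ,
        repr_relTr_orbit_mem hs B hB hex, hconst x hex, smul_eq_mul, mul_one, sub_self]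
    have hrepr'not : ∀ x : ↥s, (¬ ∃ u ∈ R, u • (b : A) = (x : A)) → B.repr a' x = B.repr a x := by
      intro x hex
      rw [ha', map_sub, map_smul, Finsupp.sub_apply, Finsupp.smul_apply, hσ,
        repr_relTr_orbit_not_mem hs B hB hex, smul_eq_mul, mul_zero, sub_zero]
    have hsub : (B.repr a').support ⊆ (B.repr a).support.erase b := by
      intro x hx
      have hxne : B.repr a' x ≠ 0 := Finsupp.mem_support_iff.mp hx
      by_cases hex : ∃ u ∈ R, u • (b : A) = (x : A)
      · exact absurd (hrepr'mem x hex) hxne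
      · refine Finset.mem_erase.mpr ⟨?_, Finsupp.mem_support_iff.mpr
          (fun h7 => hxne ((hrepr'not x hex).trans h7))⟩
        intro hxb
        exact hex ⟨1, one_mem R, by rw [hxb, one_smul]⟩
    have hcard : (B.repr a').support.card < n := by
      calc (B.repr a').support.card ≤ ((B.repr a).support.erase b).card :=
            Finset.card_le_card hsub
      _ < (B.repr a).support.card := Finset.card_erase_lt_of_mem hb
      _ = n := hn
    have ha'fix : ∀ u ∈ R, u • a' = a' := by
      intro u hu
      rw [ha', smul_sub, hfix u hu, smul_comm, hσfix u hu]
    have ha'supp : ∀ x ∈ (B.repr a').support, x ∈ C := fun x hx =>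
      hsupp x (Finset.mem_of_mem_erase (hsub hx))
    have ha'0 : ∀ x : ↥s, (∀ u ∈ R, u • (x : A) = (x : A)) → B.repr a' x = 0 := by
      intro x hxf
      have hex : ¬ ∃ u ∈ R, u • (b : A) = (x : A) := by
        rintro ⟨u, hu, hux⟩
        apply hbnf
        have h9 : u⁻¹ • (x : A) = (x : A) := hxf u⁻¹ (inv_mem hu)
        rw [← hux, inv_smul_smul] at h9
        have hbx : (b : A) = (x : A) := h9.trans hux
        intro v hv
        rw [hbx, hxf v hv]
      rw [hrepr'not x hex, h0 x hxf]
    have hmem' := ih _ hcard a' ha'fix ha'supp ha'0 rfl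
    have hσmem : σ ∈ Submodule.span k
        {y | ∃ b : ↥s, b ∈ C ∧ ¬(∀ u ∈ R, u • (b : A) = (b : A)) ∧
          y = relTr k P A (MulAction.stabilizer P (b : A) ⊓ R) R (b : A)} :=
      Submodule.subset_span ⟨b, hbC, hbnf, rfl⟩
    have hfin : a = a' + c • σ := (sub_add_cancel a (c • σ)).symm
    rw [hfin]
    exact Submodule.add_mem _ hmem' (Submodule.smul_mem _ c hσmem)

theorem traceModule_le_KK {p : ℕ} (hp : p.Prime) [CharP k p] (hP : IsPGroup p P)
    (R : Subgroup P) : traceModule k P A R ≤ KK B R := by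
  rw [traceModule]
  apply Submodule.span_le.mpr
  rintro y ⟨S, hSR, a, ha, rfl⟩
  exact ⟨fun u hu => smul_relTr a ha hu,
    fun x hx => repr_relTr_eq_zero hs B hB hp hP hSR a x hx⟩

theorem KK_le_traceModule {R : Subgroup P} (a : A) (ha : a ∈ KK B R) :
    a ∈ traceModule k P A R := by
  obtain ⟨h1, h2⟩ := ha
  have hmem := mem_span_orbits hs B hB (R := R) (C := Set.univ) a h1
    (fun x _ => Set.mem_univ x) h2
  refine Submodule.span_le.mpr ?_ hmem
  rintro y ⟨b, -, hbnf, rfl⟩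
  exact Submodule.subset_span ⟨MulAction.stabilizer P (b : A) ⊓ R, stab_lt hbnf, (b : A),
    (fun v hv => hv.1), rfl⟩

theorem repr_piQ_mem {Q : Subgroup P} (a : A) {x : ↥s}
    (hx : ∀ u ∈ Q, u • (x : A) = (x : A)) : B.repr (piQ B Q a) x = B.repr a x := by
  classical
  rw [piQ, map_sum, Finsupp.finset_sum_apply]
  have hterm : ∀ b : ↥s, B.repr (B.repr a b • ((b : ↥s) : A)) x
      = if b = x then B.repr a b else 0 := by
    intro b
    rw [map_smul, repr_single hs B hB, Finsupp.smul_apply, Finsupp.single_apply, smul_eq_mul]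
    split_ifs <;> simp
  rw [Finset.sum_congr rfl (fun b _ => hterm b), Finset.sum_ite_eq' _ x (fun b => B.repr a b)]
  by_cases hsup : x ∈ (B.repr a).support
  · rw [if_pos]
    rw [Finset.mem_filter]
    exact ⟨hsup, hx⟩
  · rw [if_neg (fun hmem => hsup (Finset.mem_filter.mp hmem).1),
      Finsupp.notMem_support_iff.mp hsup]

theorem repr_piQ_not {Q : Subgroup P} (a : A) {x : ↥s}
    (hx : ¬ ∀ u ∈ Q, u • (x : A) = (x : A)) : B.repr (piQ B Q a) x = 0 := by
  classical
  rw [piQ, map_sum, Finsupp.finset_sum_apply]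
  have hterm : ∀ b : ↥s, B.repr (B.repr a b • ((b : ↥s) : A)) x
      = if b = x then B.repr a b else 0 := by
    intro b
    rw [map_smul, repr_single hs B hB, Finsupp.smul_apply, Finsupp.single_apply, smul_eq_mul]
    split_ifs <;> simp
  rw [Finset.sum_congr rfl (fun b _ => hterm b), Finset.sum_ite_eq' _ x (fun b => B.repr a b)]
  rw [if_neg (fun hmem => hx (Finset.mem_filter.mp hmem).2)]

theorem piQ_smul {Q : Subgroup P} (hQ : Q.Normal) (u : P) (a : A) :
    u • piQ B Q a = piQ B Q (u • a) := by
  classical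
  apply B.repr.injective
  ext x
  rw [repr_smul_apply' hs B hB]
  have hval : (((permS hs u).symm x : ↥s) : A) = u⁻¹ • (x : A) := rfl
  by_cases hx : ∀ q ∈ Q, q • (x : A) = (x : A)
  · have hx' : ∀ q ∈ Q, q • (((permS hs u).symm x : ↥s) : A)
        = (((permS hs u).symm x : ↥s) : A) := by
      rw [hval]
      exact fixed_smul_of_fixed hQ hx u⁻¹
    rw [repr_piQ_mem hs B hB a hx', repr_piQ_mem hs B hB (u • a) hx,
      repr_smul_apply' hs B hB]
  · have hx' : ¬ ∀ q ∈ Q, q • (((permS hs u).symm x : ↥s) : A)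
        = (((permS hs u).symm x : ↥s) : A) := by
      intro hcon
      apply hx
      have h5 := fixed_smul_of_fixed hQ (hval ▸ hcon) u
      intro q hq
      have h6 := h5 q hq
      rwa [smul_inv_smul] at h6
    rw [repr_piQ_not hs B hB a hx', repr_piQ_not hs B hB (u • a) hx]

end Aux

/-- Brauer construction and quotients: if `A` is a `p`-permutation
`P`-algebra (it has a `P`-stable basis) and `Q ⊴ P`, then the Brauer homomorphisms
induce a `k`-algebra isomorphism `(A(Q))(P/Q) ≅ A(P)`.  Concretely:
(1) every `P/Q`-fixed point of `A(Q)` lifts to `A^P` (surjectivity);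
(2) the kernel of the composite `A^P → A(Q) → (A(Q))(P/Q)` is exactly
`Σ_{R<P} Tr_R^P(A^R)`, so the induced map `A(P) → (A(Q))(P/Q)` is bijective;
(3) `A^P` is multiplicatively closed and the relative trace sum is an ideal of it, so
both sides are `k`-algebras and the bijection is multiplicative. -/
theorem brauer_construction_compatible_with_quotient
    {p : ℕ} (hp : p.Prime) (k : Type*) [Field k] [CharP k p]
    (P : Type*) [Group P] [Finite P] (hP : IsPGroup p P)
    (A : Type*) [Ring A] [Algebra k A] [MulSemiringAction P A] [SMulCommClass P k A]
    (hbasis : ∃ s : Set A, (∀ (u : P), ∀ x ∈ s, u • x ∈ s) ∧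
      LinearIndependent k ((↑) : s → A) ∧ Submodule.span k s = ⊤)
    (Q : Subgroup P) (hQ : Q.Normal) :
    (∀ a ∈ fixedSubmodule k P A Q,
      (∀ u : P, u • a - a ∈ traceModule k P A Q) →
      ∃ b ∈ fixedSubmodule k P A ⊤, a - b ∈ traceModule k P A Q) ∧
    (fixedSubmodule k P A ⊤ ⊓ (midTraceModule k P A Q ⊤ ⊔ traceModule k P A Q) =
      traceModule k P A ⊤) ∧
    (∀ a b : A, a ∈ fixedSubmodule k P A ⊤ → b ∈ fixedSubmodule k P A ⊤ →
      a * b ∈ fixedSubmodule k P A ⊤) ∧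
    (∀ a b : A, a ∈ fixedSubmodule k P A ⊤ → b ∈ traceModule k P A ⊤ →
      a * b ∈ traceModule k P A ⊤ ∧ b * a ∈ traceModule k P A ⊤) := by
  classical
  obtain ⟨s, hs, hli, hspan⟩ := hbasis
  have hspan' : ⊤ ≤ Submodule.span k (Set.range ((↑) : ↥s → A)) := by
    rw [Subtype.range_coe, hspan]
  let B : Module.Basis ↥s k A := Module.Basis.mk hli hspan'
  have hB : ∀ b : ↥s, (B b : A) = (b : A) := fun b => Module.Basis.mk_apply hli hspan' b
  refine ⟨?_, ?_, ?_, ?_⟩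
  · -- (1) surjectivity
    intro a haQ hstab
    refine ⟨piQ B Q a, ?_, ?_⟩
    · show ∀ u ∈ (⊤ : Subgroup P), u • piQ B Q a = piQ B Q a
      intro u _
      rw [piQ_smul hs B hB hQ u a]
      apply B.repr.injective
      ext x
      by_cases hx : ∀ q ∈ Q, q • (x : A) = (x : A)
      · rw [repr_piQ_mem hs B hB (u • a) hx, repr_piQ_mem hs B hB a hx]
        obtain ⟨-, h2⟩ := traceModule_le_KK hs B hB hp hP Q (hstab u)
        have h3 := h2 x hx
        rw [map_sub, Finsupp.sub_apply, sub_eq_zero] at h3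
        exact h3
      · rw [repr_piQ_not hs B hB (u • a) hx, repr_piQ_not hs B hB a hx]
    · apply KK_le_traceModule hs B hB
      refine ⟨?_, ?_⟩
      · intro q hq
        rw [smul_sub, haQ q hq, piQ_fixed B Q a q hq]
      · intro x hx
        rw [map_sub, Finsupp.sub_apply, repr_piQ_mem hs B hB a hx, sub_self]
  · -- (2) kernel identification
    apply le_antisymm
    · intro a ha
      obtain ⟨hafix, hasum⟩ := Submodule.mem_inf.mp ha
      obtain ⟨m, hm, t, ht, rfl⟩ := Submodule.mem_sup.mp hasum
      have hmid_le : midTraceModule k P A Q ⊤ ≤ traceModule k P A ⊤ := by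
        rw [midTraceModule, traceModule]
        apply Submodule.span_le.mpr
        rintro y ⟨S, hQS, hS, a', ha', rfl⟩
        exact Submodule.subset_span ⟨S, hS, a', ha', rfl⟩
      apply KK_le_traceModule hs B hB
      refine ⟨hafix, ?_⟩
      intro x hx
      obtain ⟨-, hm2⟩ := traceModule_le_KK hs B hB hp hP ⊤ (hmid_le hm)
      obtain ⟨-, ht2⟩ := traceModule_le_KK hs B hB hp hP Q ht
      rw [map_add, Finsupp.add_apply, hm2 x hx, ht2 x (fun q _ => hx q trivial), add_zero]
    · intro a ha
      obtain ⟨haf, haz⟩ := traceModule_le_KK hs B hB hp hP ⊤ ha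
      refine Submodule.mem_inf.mpr ⟨haf, ?_⟩
      refine Submodule.mem_sup.mpr ⟨piQ B Q a, ?_, a - piQ B Q a, ?_, by abel⟩
      · -- piQ B Q a ∈ midTraceModule Q ⊤
        have hfixtot : ∀ u ∈ (⊤ : Subgroup P), u • piQ B Q a = piQ B Q a := by
          intro u _
          rw [piQ_smul hs B hB hQ u a, haf u trivial]
        have hsupp : ∀ x ∈ (B.repr (piQ B Q a)).support,
            x ∈ {b : ↥s | ∀ q ∈ Q, q • (b : A) = (b : A)} := by
          intro x hxs
          by_contra hxc
          exact (Finsupp.mem_support_iff.mp hxs) (repr_piQ_not hs B hB a hxc)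
        have h0 : ∀ x : ↥s, (∀ u ∈ (⊤ : Subgroup P), u • (x : A) = (x : A)) →
            B.repr (piQ B Q a) x = 0 := by
          intro x hxf
          rw [repr_piQ_mem hs B hB a (fun q _ => hxf q trivial)]
          exact haz x hxf
        have hmem := mem_span_orbits hs B hB (R := (⊤ : Subgroup P))
          (C := {b : ↥s | ∀ q ∈ Q, q • (b : A) = (b : A)}) (piQ B Q a) hfixtot hsupp h0
        rw [midTraceModule]
        refine Submodule.span_le.mpr ?_ hmem
        rintro y ⟨b, hbC, hbnf, rfl⟩
        apply Submodule.subset_span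
        refine ⟨MulAction.stabilizer P (b : A) ⊓ ⊤, ?_, stab_lt hbnf, (b : A),
          (fun v hv => hv.1), rfl⟩
        intro q hq
        exact ⟨hbC q hq, trivial⟩
      · apply KK_le_traceModule hs B hB
        refine ⟨?_, ?_⟩
        · intro q hq
          rw [smul_sub, haf q trivial, piQ_fixed B Q a q hq]
        · intro x hx
          rw [map_sub, Finsupp.sub_apply, repr_piQ_mem hs B hB a hx, sub_self]
  · -- (3) multiplicativity of fixed points
    intro a b ha hb
    intro u hu
    rw [smul_mul', ha u hu, hb u hu]
  · -- (4) ideal property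
    intro a b ha hb
    have ha' : ∀ u : P, u • a = a := fun u => ha u trivial
    exact ⟨traceModule_mul_left a ha' hb, traceModule_mul_right a ha' hb⟩
end
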